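/- arXiv:1511.05864 — 7 statements merged into one kernel-verified Lean document; each statement's English description precedes it below -/
import Mathlib

section
/- Let F : ℝ^p → (−∞, +∞] be proper, convex, lower semicontinuous, let G be a norm on ℝ^p, X ∈ ℝ^{n×p}, y ∈ ℝ^n, A = Xᵀ[I_n, −X] ∈ ℝ^{p×(n+p)}, L = ‖A‖ (operator norm), and let φ(w,v) = ⟨Xᵀ(y − Xw), v⟩ + F(w) − G(v). Fix τ₀, σ₀ > 0 with τ₀σ₀L² < 1. Let the sequences be generated by: v_{k+1} = prox_{σ₀ G}(v_k + σ₀(Xᵀy − XᵀX w'_k)), w_{k+1} = prox_{τ₀ F}(w_k + τ₀ XᵀX v_{k+1}), w'_{k+1} = 2 w_{k+1} − w_k, with w'_0 = w_0. If (w*, v*) is a saddle point of φ (i.e. φ(w*, v) ≤ φ(w*, v*) ≤ φ(w, v*) for all w, v), then for all k, ‖w_k − w*‖²/τ₀ + ‖v_k − v*‖²/σ₀ ≤ C (‖w₀ − w*‖²/τ₀ + ‖v₀ − v*‖²/σ₀) with C = 1/(1 − τ₀σ₀L²). -/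
open Matrix Finset

noncomputable section

/-- Euclidean inner product on ℝ^p. -/
def dotp {p : ℕ} (x y : Fin p → ℝ) : ℝ := ∑ i, x i * y i

/-- Squared Euclidean norm on ℝ^p. -/
def normSq {p : ℕ} (x : Fin p → ℝ) : ℝ := ∑ i, x i ^ 2

/-- ℓ2-operator norm of a real matrix. -/
def opNorm {m k : Type} [Fintype m] [Fintype k] (A : Matrix m k ℝ) : ℝ :=
  sSup {c | ∃ z : k → ℝ, (∑ i, z i ^ 2) ≤ 1 ∧ c = Real.sqrt (∑ i, (A.mulVec z) i ^ 2)}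

/-- `G` is a norm on ℝ^p. -/
def IsNorm {p : ℕ} (G : (Fin p → ℝ) → ℝ) : Prop :=
  (∀ x, G x = 0 ↔ x = 0) ∧ (∀ (a : ℝ) x, G (a • x) = |a| * G x) ∧
    (∀ x z, G (x + z) ≤ G x + G z)

/-- `F : ℝ^p → (−∞, +∞]` is proper, convex and lower semicontinuous. -/
def ProperConvexLsc {p : ℕ} (F : (Fin p → ℝ) → EReal) : Prop :=
  (∀ w, F w ≠ ⊥) ∧ (∃ w, F w ≠ ⊤) ∧
    (∀ (w₁ w₂ : Fin p → ℝ) (a b : ℝ), 0 ≤ a → 0 ≤ b → a + b = 1 →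
      F (a • w₁ + b • w₂) ≤ (a : EReal) * F w₁ + (b : EReal) * F w₂) ∧
    LowerSemicontinuous F

/-- The convex-concave saddle function φ(w,v) = ⟨Xᵀ(y − Xw), v⟩ + F(w) − G(v). -/
def phi {n p : ℕ} (X : Matrix (Fin n) (Fin p) ℝ) (y : Fin n → ℝ)
    (F : (Fin p → ℝ) → EReal) (G : (Fin p → ℝ) → ℝ)
    (w v : Fin p → ℝ) : EReal :=
  ((dotp (Xᵀ.mulVec (y - X.mulVec w)) v : ℝ) : EReal) + F w - ((G v : ℝ) : EReal)

/-- `(wstar, vstar)` is a saddle point of φ. -/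
def IsSaddle {n p : ℕ} (X : Matrix (Fin n) (Fin p) ℝ) (y : Fin n → ℝ)
    (F : (Fin p → ℝ) → EReal) (G : (Fin p → ℝ) → ℝ)
    (wstar vstar : Fin p → ℝ) : Prop :=
  ∀ w v, phi X y F G wstar v ≤ phi X y F G wstar vstar ∧
    phi X y F G wstar vstar ≤ phi X y F G w vstar

namespace PDSP

variable {n p : ℕ}

lemma dotp_comm (x y : Fin p → ℝ) : dotp x y = dotp y x := by
  simp [dotp, mul_comm]

lemma normSq_nonneg' (x : Fin p → ℝ) : 0 ≤ normSq x :=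
  Finset.sum_nonneg fun i _ => sq_nonneg _

lemma cauchy (x y : Fin p → ℝ) :
    dotp x y ≤ Real.sqrt (normSq x) * Real.sqrt (normSq y) :=
  Real.sum_mul_le_sqrt_mul_sqrt _ _ _

lemma normSq_seg (x z u : Fin p → ℝ) (t : ℝ) :
    normSq (x + t • (u - x) - z)
      = normSq (x - z) + 2*t*dotp (u - x) (x - z) + t^2 * normSq (u - x) := by
  simp only [dotp, normSq, Pi.sub_apply, Pi.add_apply, Pi.smul_apply, smul_eq_mul,
    Finset.mul_sum, ← Finset.sum_add_distrib]
  exact Finset.sum_congr rfl fun i _ => by ring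

lemma normSq_sub_comm (x y : Fin p → ℝ) : normSq (x - y) = normSq (y - x) := by
  simp only [normSq, Pi.sub_apply]
  exact Finset.sum_congr rfl fun i _ => by ring

lemma dotp_mulVec_left {M : Matrix (Fin p) (Fin p) ℝ} (a b : Fin p → ℝ) :
    dotp (M.mulVec a) b = dotp a (Mᵀ.mulVec b) := by
  simp only [dotp, Matrix.mulVec, dotProduct, transpose_apply,
    Finset.sum_mul, Finset.mul_sum]
  rw [Finset.sum_comm]
  exact Finset.sum_congr rfl fun i _ => Finset.sum_congr rfl fun j _ => by ring

lemma opnorm_set_bddAbove {m k : Type} [Fintype m] [Fintype k] (A : Matrix m k ℝ) :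
    BddAbove {c | ∃ z : k → ℝ, (∑ i, z i ^ 2) ≤ 1 ∧ c = Real.sqrt (∑ i, (A.mulVec z) i ^ 2)} := by
  refine ⟨Real.sqrt (∑ i, ∑ j, A i j ^ 2), ?_⟩
  rintro c ⟨z, hz, rfl⟩
  apply Real.sqrt_le_sqrt
  apply Finset.sum_le_sum
  intro i _
  calc (A.mulVec z) i ^ 2 = (∑ j, A i j * z j) ^ 2 := by
        simp [Matrix.mulVec, dotProduct]
    _ ≤ (∑ j, A i j ^ 2) * (∑ j, z j ^ 2) := Finset.sum_mul_sq_le_sq_mul_sq _ _ _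
    _ ≤ (∑ j, A i j ^ 2) * 1 := by
        apply mul_le_mul_of_nonneg_left hz (Finset.sum_nonneg fun _ _ => sq_nonneg _)
    _ = ∑ j, A i j ^ 2 := mul_one _

lemma opNorm_nonneg {m k : Type} [Fintype m] [Fintype k] (A : Matrix m k ℝ) :
    0 ≤ opNorm A := by
  apply le_csSup (opnorm_set_bddAbove A)
  exact ⟨0, by simp, by simp [Matrix.mulVec_zero]⟩

lemma opNorm_unit {m k : Type} [Fintype m] [Fintype k] (A : Matrix m k ℝ)
    (z : k → ℝ) (hz : (∑ i, z i ^ 2) ≤ 1) :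
    Real.sqrt (∑ i, (A.mulVec z) i ^ 2) ≤ opNorm A :=
  le_csSup (opnorm_set_bddAbove A) ⟨z, hz, rfl⟩

lemma K_mulVec_bound (X : Matrix (Fin n) (Fin p) ℝ) (u : Fin p → ℝ) :
    Real.sqrt (normSq ((Xᵀ * X).mulVec u))
      ≤ opNorm (Xᵀ * fromCols (1 : Matrix (Fin n) (Fin n) ℝ) (-X)) * Real.sqrt (normSq u) := by
  set A := Xᵀ * fromCols (1 : Matrix (Fin n) (Fin n) ℝ) (-X) with hA
  have key : ∀ z : Fin p → ℝ, A.mulVec (Sum.elim (0 : Fin n → ℝ) (-z)) = (Xᵀ * X).mulVec z := by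
    intro z
    rw [hA, ← Matrix.mulVec_mulVec, fromCols_mulVec_sumElim]
    simp [Matrix.neg_mulVec, Matrix.mulVec_neg, Matrix.mulVec_mulVec]
  have hsum : ∀ z : Fin p → ℝ, (∑ i : Fin n ⊕ Fin p, (Sum.elim (0 : Fin n → ℝ) (-z)) i ^ 2)
      = normSq z := by
    intro z
    rw [Fintype.sum_sum_type]
    simp [normSq]
  rcases eq_or_ne u 0 with rfl | hu
  · simp [Matrix.mulVec_zero, normSq, mul_nonneg (opNorm_nonneg A) (Real.sqrt_nonneg _)]
  · have hc : 0 < normSq u := by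
      rcases lt_or_eq_of_le (Finset.sum_nonneg fun i _ => sq_nonneg (u i)) with h | h
      · exact h
      · exfalso; apply hu; funext i
        have := (Finset.sum_eq_zero_iff_of_nonneg (fun i _ => sq_nonneg (u i))).1 h.symm i (by simp)
        exact pow_eq_zero_iff (n := 2) (by norm_num) |>.1 this
    set c := Real.sqrt (normSq u) with hcdef
    have hc0 : 0 < c := Real.sqrt_pos.2 hc
    have hz1 : (∑ i : Fin n ⊕ Fin p, (Sum.elim (0 : Fin n → ℝ) (-(c⁻¹ • u))) i ^ 2) ≤ 1 := by
      rw [hsum]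
      have : normSq (c⁻¹ • u) = (c⁻¹)^2 * normSq u := by
        simp only [normSq, Pi.smul_apply, smul_eq_mul, Finset.mul_sum]
        exact Finset.sum_congr rfl fun i _ => by ring
      rw [this, hcdef]
      rw [Real.sq_sqrt hc.le |>.symm] at *
      field_simp
      rw [Real.sqrt_sq (Real.sqrt_nonneg _)]
    have := opNorm_unit A _ hz1
    rw [key (c⁻¹ • u)] at this
    have hKs : (Xᵀ * X).mulVec (c⁻¹ • u) = c⁻¹ • (Xᵀ * X).mulVec u := (Matrix.mulVec_smul _ _ _)
    rw [hKs] at this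
    replace this : Real.sqrt (normSq (c⁻¹ • ((Xᵀ * X).mulVec u))) ≤ opNorm A := this
    have hns : Real.sqrt (normSq (c⁻¹ • (Xᵀ * X).mulVec u))
        = c⁻¹ * Real.sqrt (normSq ((Xᵀ * X).mulVec u)) := by
      have h1 : normSq (c⁻¹ • (Xᵀ * X).mulVec u) = (c⁻¹)^2 * normSq ((Xᵀ * X).mulVec u) := by
        simp only [normSq, Pi.smul_apply, smul_eq_mul, Finset.mul_sum]
        exact Finset.sum_congr rfl fun i _ => by ring
      rw [h1, Real.sqrt_mul (sq_nonneg _), Real.sqrt_sq (inv_nonneg.2 hc0.le)]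
    rw [hns] at this
    calc Real.sqrt (normSq ((Xᵀ * X).mulVec u))
        = c * (c⁻¹ * Real.sqrt (normSq ((Xᵀ * X).mulVec u))) := by field_simp
      _ ≤ c * opNorm A := by
          apply mul_le_mul_of_nonneg_left this hc0.le
      _ = opNorm A * c := mul_comm _ _

lemma tsmall (a c : ℝ) (hc : 0 ≤ c) (h : ∀ t : ℝ, 0 < t → t ≤ 1 → a ≤ t * c) : a ≤ 0 := by
  by_contra hpos
  push_neg at hpos
  rcases eq_or_lt_of_le hc with hc0 | hc0
  · have := h 1 one_pos le_rfl
    rw [← hc0] at this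
    linarith
  · have ht : 0 < min 1 (a / (2*c)) := lt_min one_pos (by positivity)
    have := h _ ht (min_le_left _ _)
    have h2 : min 1 (a / (2*c)) * c ≤ (a / (2*c)) * c :=
      mul_le_mul_of_nonneg_right (min_le_right _ _) hc
    have h3 : (a / (2*c)) * c = a/2 := by field_simp
    linarith

lemma seg_eq (x u : Fin p → ℝ) (t : ℝ) :
    (1-t) • x + t • u = x + t • (u - x) := by
  funext i
  simp [Pi.smul_apply, smul_eq_mul]
  ring

/-- Variational inequality from the prox-minimality for G. -/
lemma prox_vi_G (G : (Fin p → ℝ) → ℝ) (hG : IsNorm G) (σ : ℝ) (hσ : 0 < σ)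
    (x z : Fin p → ℝ)
    (h : ∀ u, normSq (x - z) / 2 + σ * G x ≤ normSq (u - z) / 2 + σ * G u)
    (u : Fin p → ℝ) :
    σ * G x ≤ σ * G u + dotp (u - x) (x - z) := by
  obtain ⟨h0, hhom, hsub⟩ := hG
  have a_le : ∀ t : ℝ, 0 < t → t ≤ 1 →
      σ * G x - σ * G u - dotp (u - x) (x - z) ≤ t * (normSq (u - x) / 2) := by
    intro t ht ht1
    have hGm : G (x + t • (u - x)) ≤ (1-t) * G x + t * G u := by
      rw [← seg_eq]
      calc G ((1-t) • x + t • u) ≤ G ((1-t) • x) + G (t • u) := hsub _ _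
        _ = (1-t) * G x + t * G u := by
            rw [hhom, hhom, abs_of_nonneg (by linarith), abs_of_nonneg ht.le]
    have hm := h (x + t • (u - x))
    rw [normSq_seg] at hm
    have key : t * (σ * G x - σ * G u - dotp (u - x) (x - z))
        ≤ t * (t * (normSq (u - x) / 2)) := by nlinarith
    exact le_of_mul_le_mul_left key ht
  have := tsmall _ _ (by have := normSq_nonneg' (u - x); linarith) a_le
  linarith

/-- Variational inequality from the prox-minimality for F (EReal valued). -/
lemma prox_vi_F (F : (Fin p → ℝ) → EReal) (hF : ProperConvexLsc F)
    (τ : ℝ) (hτ : 0 < τ) (x z : Fin p → ℝ)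
    (h : ∀ u : Fin p → ℝ,
      ((normSq (x - z) / 2 : ℝ) : EReal) + (τ : EReal) * F x
        ≤ ((normSq (u - z) / 2 : ℝ) : EReal) + (τ : EReal) * F u)
    (u : Fin p → ℝ) (fx fu : ℝ) (hfx : F x = (fx : ℝ)) (hfu : F u = (fu : ℝ)) :
    τ * fx ≤ τ * fu + dotp (u - x) (x - z) := by
  obtain ⟨hbot, -, hconv, -⟩ := hF
  have a_le : ∀ t : ℝ, 0 < t → t ≤ 1 →
      τ * fx - τ * fu - dotp (u - x) (x - z) ≤ t * (normSq (u - x) / 2) := by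
    intro t ht ht1
    set m := x + t • (u - x) with hm
    have hFm_le : F m ≤ (((1-t) * fx + t * fu : ℝ) : EReal) := by
      have := hconv x u (1-t) t (by linarith) ht.le (by ring)
      rw [seg_eq x u t, hfx, hfu] at this
      calc F m ≤ ((1-t : ℝ) : EReal) * ((fx : ℝ) : EReal) + (t : EReal) * ((fu : ℝ) : EReal) := this
        _ = (((1-t) * fx + t * fu : ℝ) : EReal) := by
            rw [← EReal.coe_mul, ← EReal.coe_mul, ← EReal.coe_add]
    have hFm_ne_top : F m ≠ ⊤ := fun htop => by
      rw [htop] at hFm_le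
      exact (EReal.coe_lt_top _).not_ge hFm_le
    set fm := (F m).toReal with hfm
    have hFm : F m = (fm : ℝ) := (EReal.coe_toReal hFm_ne_top (hbot m)).symm
    have hfm_le : fm ≤ (1-t) * fx + t * fu := by
      rw [hFm] at hFm_le
      exact_mod_cast hFm_le
    have hmineq := h m
    rw [hFm, hfx, ← EReal.coe_mul, ← EReal.coe_mul, ← EReal.coe_add, ← EReal.coe_add] at hmineq
    have hreal : normSq (x - z) / 2 + τ * fx ≤ normSq (m - z) / 2 + τ * fm := by
      exact_mod_cast hmineq
    rw [hm, normSq_seg] at hreal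
    have key : t * (τ * fx - τ * fu - dotp (u - x) (x - z))
        ≤ t * (t * (normSq (u - x) / 2)) := by nlinarith
    exact le_of_mul_le_mul_left key ht
  have := tsmall _ _ (by have := normSq_nonneg' (u - x); linarith) a_le
  linarith


lemma phi_coe (X : Matrix (Fin n) (Fin p) ℝ) (y : Fin n → ℝ)
    (F : (Fin p → ℝ) → EReal) (G : (Fin p → ℝ) → ℝ) (w v : Fin p → ℝ)
    (f : ℝ) (hf : F w = (f : ℝ)) :
    phi X y F G w v = ((dotp (Xᵀ.mulVec (y - X.mulVec w)) v + f - G v : ℝ) : EReal) := by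
  rw [phi, hf, ← EReal.coe_add, ← EReal.coe_sub]

lemma phi_top (X : Matrix (Fin n) (Fin p) ℝ) (y : Fin n → ℝ)
    (F : (Fin p → ℝ) → EReal) (G : (Fin p → ℝ) → ℝ) (w v : Fin p → ℝ)
    (hf : F w = ⊤) :
    phi X y F G w v = ⊤ := by
  rw [phi, hf, EReal.add_top_of_ne_bot (EReal.coe_ne_bot _), EReal.top_sub_coe]

end PDSP

open PDSP

set_option maxHeartbeats 2000000 in
/-- boundedness of the primal-dual iterates. -/
theorem pdsp_bounded {n p : ℕ} (X : Matrix (Fin n) (Fin p) ℝ) (y : Fin n → ℝ)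
    (F : (Fin p → ℝ) → EReal) (G : (Fin p → ℝ) → ℝ)
    (hF : ProperConvexLsc F) (hG : IsNorm G)
    (L : ℝ) (hL : L = opNorm (Xᵀ * fromCols (1 : Matrix (Fin n) (Fin n) ℝ) (-X)))
    (τ σ : ℝ) (hτ : 0 < τ) (hσ : 0 < σ) (hstep : τ * σ * L ^ 2 < 1)
    (w v w' : ℕ → Fin p → ℝ)
    (hw'0 : w' 0 = w 0)
    -- v_{k+1} = prox_{σ G}(v_k + σ(Xᵀy − XᵀX w'_k))
    (hv : ∀ k, ∀ u : Fin p → ℝ,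
      normSq (v (k+1) - (v k + σ • (Xᵀ.mulVec y - (Xᵀ * X).mulVec (w' k)))) / 2
          + σ * G (v (k+1))
        ≤ normSq (u - (v k + σ • (Xᵀ.mulVec y - (Xᵀ * X).mulVec (w' k)))) / 2
          + σ * G u)
    -- w_{k+1} = prox_{τ F}(w_k + τ XᵀX v_{k+1})
    (hw : ∀ k, ∀ u : Fin p → ℝ,
      ((normSq (w (k+1) - (w k + τ • (Xᵀ * X).mulVec (v (k+1)))) / 2 : ℝ) : EReal)
          + (τ : EReal) * F (w (k+1))
        ≤ ((normSq (u - (w k + τ • (Xᵀ * X).mulVec (v (k+1)))) / 2 : ℝ) : EReal)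
          + (τ : EReal) * F u)
    -- extrapolation step
    (hw' : ∀ k, w' (k+1) = (2 : ℝ) • w (k+1) - w k)
    (wstar vstar : Fin p → ℝ)
    (hsaddle : IsSaddle X y F G wstar vstar) :
    ∀ k, normSq (w k - wstar) / τ + normSq (v k - vstar) / σ
      ≤ (1 / (1 - τ * σ * L ^ 2)) *
        (normSq (w 0 - wstar) / τ + normSq (v 0 - vstar) / σ) := by
  obtain ⟨hbot, ⟨w0f, hw0f⟩, hconv, hlsc⟩ := hF
  have hFprop : ProperConvexLsc F := ⟨hbot, ⟨w0f, hw0f⟩, hconv, hlsc⟩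
  have hL0 : 0 ≤ L := hL ▸ opNorm_nonneg _
  have hθ0 : 0 ≤ τ * σ * L ^ 2 := by positivity
  -- coupling rewrite
  have cpl : ∀ u : Fin p → ℝ, Xᵀ.mulVec (y - X.mulVec u)
      = Xᵀ.mulVec y - (Xᵀ * X).mulVec u := by
    intro u
    rw [Matrix.mulVec_sub, Matrix.mulVec_mulVec]
  -- F wstar is finite
  have hFstar_ne_top : F wstar ≠ ⊤ := by
    intro htop
    have h1 := (hsaddle w0f vstar).2
    rw [phi_top X y F G wstar vstar htop] at h1
    have hf0 : F w0f = ((F w0f).toReal : ℝ) := (EReal.coe_toReal hw0f (hbot w0f)).symm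
    rw [phi_coe X y F G w0f vstar _ hf0] at h1
    exact (EReal.coe_lt_top _).not_ge h1
  set fstar : ℝ := (F wstar).toReal with hfstar_def
  have hFstar : F wstar = (fstar : ℝ) := (EReal.coe_toReal hFstar_ne_top (hbot wstar)).symm
  -- real saddle inequalities
  have hS1 : ∀ v' : Fin p → ℝ,
      dotp (Xᵀ.mulVec y - (Xᵀ * X).mulVec wstar) v' - G v'
        ≤ dotp (Xᵀ.mulVec y - (Xᵀ * X).mulVec wstar) vstar - G vstar := by
    intro v'
    have h1 := (hsaddle wstar v').1
    rw [phi_coe X y F G wstar v' _ hFstar, phi_coe X y F G wstar vstar _ hFstar,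
      EReal.coe_le_coe_iff, cpl] at h1
    linarith
  have hS2 : ∀ (u : Fin p → ℝ) (f : ℝ), F u = (f : ℝ) →
      dotp (Xᵀ.mulVec y - (Xᵀ * X).mulVec wstar) vstar + fstar
        ≤ dotp (Xᵀ.mulVec y - (Xᵀ * X).mulVec u) vstar + f := by
    intro u f hfu
    have h1 := (hsaddle u vstar).2
    rw [phi_coe X y F G wstar vstar _ hFstar, phi_coe X y F G u vstar _ hfu,
      EReal.coe_le_coe_iff, cpl, cpl] at h1
    linarith
  -- finiteness of F (w (k+1))
  have hFfin : ∀ k, F (w (k+1)) = (((F (w (k+1))).toReal : ℝ) : EReal) := by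
    intro k
    have h1 := hw k wstar
    rw [hFstar, ← EReal.coe_mul, ← EReal.coe_add] at h1
    have hne : F (w (k+1)) ≠ ⊤ := by
      intro htop
      rw [htop, EReal.coe_mul_top_of_pos hτ, EReal.add_top_of_ne_bot (EReal.coe_ne_bot _)] at h1
      exact (EReal.coe_lt_top _).not_ge h1
    exact (EReal.coe_toReal hne (hbot _)).symm
  -- the unified extrapolation identity: w' k = w k + (w k - w (k-1))
  have hw'all : ∀ k, w' k = w k + (w k - w (k-1)) := by
    intro k
    cases k with
    | zero =>
        rw [hw'0]
        funext i; simp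
    | succ j =>
        rw [hw' j]
        simp only [Nat.add_sub_cancel]
        funext i
        simp only [Pi.sub_apply, Pi.add_apply, Pi.smul_apply, smul_eq_mul]
        ring
  -- one-step decrease of the Lyapunov function
  have hkey : ∀ k,
      τ * normSq (v (k+1) - vstar) + σ * normSq (w (k+1) - wstar)
        + σ * normSq (w (k+1) - w k)
        - 2*σ*τ * dotp ((Xᵀ*X).mulVec (w (k+1)) - (Xᵀ*X).mulVec (w k)) (v (k+1) - vstar)
      ≤ τ * normSq (v k - vstar) + σ * normSq (w k - wstar)
        + σ * normSq (w k - w (k-1))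
        - 2*σ*τ * dotp ((Xᵀ*X).mulVec (w k) - (Xᵀ*X).mulVec (w (k-1))) (v k - vstar) := by
    intro k
    -- the four basic inequalities
    have h1 := prox_vi_G G hG σ hσ (v (k+1))
      (v k + σ • (Xᵀ.mulVec y - (Xᵀ*X).mulVec (w' k))) (hv k) vstar
    rw [hw'all k, Matrix.mulVec_add, Matrix.mulVec_sub] at h1
    have h2 := mul_le_mul_of_nonneg_left (hS1 (v (k+1))) hσ.le
    rw [mul_sub, mul_sub] at h2
    have hf1 : F (w (k+1)) = (((F (w (k+1))).toReal : ℝ) : EReal) := hFfin k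
    have h3 := prox_vi_F F hFprop τ hτ (w (k+1))
      (w k + τ • (Xᵀ*X).mulVec (v (k+1))) (hw k) wstar _ fstar hf1 hFstar
    have h4 := mul_le_mul_of_nonneg_left (hS2 (w (k+1)) _ hf1) hτ.le
    rw [mul_add, mul_add] at h4
    -- identities (bilinear algebra)
    have GA : dotp (vstar - v (k+1)) (v (k+1) - (v k + σ • (Xᵀ.mulVec y -
          ((Xᵀ*X).mulVec (w k) + ((Xᵀ*X).mulVec (w k) - (Xᵀ*X).mulVec (w (k-1)))))))
        + σ * dotp (Xᵀ.mulVec y - (Xᵀ*X).mulVec wstar) vstar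
        - σ * dotp (Xᵀ.mulVec y - (Xᵀ*X).mulVec wstar) (v (k+1))
        = dotp (vstar - v (k+1)) (v (k+1) - v k)
          + σ * dotp (v (k+1) - vstar) ((Xᵀ*X).mulVec wstar -
              ((Xᵀ*X).mulVec (w k) + ((Xᵀ*X).mulVec (w k) - (Xᵀ*X).mulVec (w (k-1))))) := by
      simp only [dotp, Pi.sub_apply, Pi.add_apply, Pi.smul_apply, smul_eq_mul,
        Finset.mul_sum, ← Finset.sum_add_distrib, ← Finset.sum_sub_distrib]
      exact Finset.sum_congr rfl fun i _ => by ring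
    have hA : 0 ≤ dotp (vstar - v (k+1)) (v (k+1) - v k)
        + σ * dotp (v (k+1) - vstar) ((Xᵀ*X).mulVec wstar -
            ((Xᵀ*X).mulVec (w k) + ((Xᵀ*X).mulVec (w k) - (Xᵀ*X).mulVec (w (k-1))))) := by
      linarith [h1, h2, GA]
    have GB : dotp (wstar - w (k+1)) (w (k+1) - (w k + τ • (Xᵀ*X).mulVec (v (k+1))))
        = dotp (wstar - w (k+1)) (w (k+1) - w k)
          - τ * dotp (wstar - w (k+1)) ((Xᵀ*X).mulVec (v (k+1))) := by
      simp only [dotp, Pi.sub_apply, Pi.add_apply, Pi.smul_apply, smul_eq_mul,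
        Finset.mul_sum, ← Finset.sum_sub_distrib]
      exact Finset.sum_congr rfl fun i _ => by ring
    have I3 : dotp (wstar - w (k+1)) ((Xᵀ*X).mulVec (v (k+1)))
        = dotp ((Xᵀ*X).mulVec wstar - (Xᵀ*X).mulVec (w (k+1))) (v (k+1)) := by
      rw [← Matrix.mulVec_sub, dotp_mulVec_left, Matrix.transpose_mul,
        Matrix.transpose_transpose]
    have GB2 : - (τ * dotp ((Xᵀ*X).mulVec wstar - (Xᵀ*X).mulVec (w (k+1))) (v (k+1)))
        + τ * dotp (Xᵀ.mulVec y - (Xᵀ*X).mulVec (w (k+1))) vstar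
        - τ * dotp (Xᵀ.mulVec y - (Xᵀ*X).mulVec wstar) vstar
        = τ * dotp ((Xᵀ*X).mulVec wstar - (Xᵀ*X).mulVec (w (k+1))) (vstar - v (k+1)) := by
      simp only [dotp, Pi.sub_apply, Finset.mul_sum, ← Finset.sum_add_distrib,
        ← Finset.sum_sub_distrib, ← Finset.sum_neg_distrib]
      exact Finset.sum_congr rfl fun i _ => by ring
    rw [I3] at GB
    have hB : 0 ≤ dotp (wstar - w (k+1)) (w (k+1) - w k)
        + τ * dotp ((Xᵀ*X).mulVec wstar - (Xᵀ*X).mulVec (w (k+1))) (vstar - v (k+1)) := by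
      linarith [h3, h4, GB, GB2]
    have hAτ := mul_le_mul_of_nonneg_left hA hτ.le
    rw [mul_zero, mul_add] at hAτ
    have hBσ := mul_le_mul_of_nonneg_left hB hσ.le
    rw [mul_zero, mul_add] at hBσ
    have I4 : τ * (2 * dotp (vstar - v (k+1)) (v (k+1) - v k))
        = τ * normSq (v k - vstar) - τ * normSq (v (k+1) - vstar)
          - τ * normSq (v (k+1) - v k) := by
      simp only [dotp, normSq, Pi.sub_apply, Finset.mul_sum, ← Finset.sum_sub_distrib]
      exact Finset.sum_congr rfl fun i _ => by ring
    have I5 : σ * (2 * dotp (wstar - w (k+1)) (w (k+1) - w k))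
        = σ * normSq (w k - wstar) - σ * normSq (w (k+1) - wstar)
          - σ * normSq (w (k+1) - w k) := by
      simp only [dotp, normSq, Pi.sub_apply, Finset.mul_sum, ← Finset.sum_sub_distrib]
      exact Finset.sum_congr rfl fun i _ => by ring
    have Icross : τ * (σ * dotp (v (k+1) - vstar) ((Xᵀ*X).mulVec wstar -
          ((Xᵀ*X).mulVec (w k) + ((Xᵀ*X).mulVec (w k) - (Xᵀ*X).mulVec (w (k-1))))))
        + σ * (τ * dotp ((Xᵀ*X).mulVec wstar - (Xᵀ*X).mulVec (w (k+1))) (vstar - v (k+1)))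
        = σ*τ*dotp ((Xᵀ*X).mulVec (w (k+1)) - (Xᵀ*X).mulVec (w k)) (v (k+1) - vstar)
          - σ*τ*dotp ((Xᵀ*X).mulVec (w k) - (Xᵀ*X).mulVec (w (k-1))) (v k - vstar)
          - σ*τ*dotp ((Xᵀ*X).mulVec (w k) - (Xᵀ*X).mulVec (w (k-1))) (v (k+1) - v k) := by
      simp only [dotp, Pi.sub_apply, Pi.add_apply, Finset.mul_sum,
        ← Finset.sum_add_distrib, ← Finset.sum_sub_distrib]
      exact Finset.sum_congr rfl fun i _ => by ring
    -- Young's inequality for the residual cross term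
    have IO1 : dotp ((Xᵀ*X).mulVec (w k) - (Xᵀ*X).mulVec (w (k-1))) (v k - v (k+1))
        = - dotp ((Xᵀ*X).mulVec (w k) - (Xᵀ*X).mulVec (w (k-1))) (v (k+1) - v k) := by
      simp only [dotp, Pi.sub_apply, ← Finset.sum_neg_distrib]
      exact Finset.sum_congr rfl fun i _ => by ring
    have INs : normSq (v k - v (k+1)) = normSq (v (k+1) - v k) := normSq_sub_comm _ _
    have hY : 2*(σ*τ*dotp ((Xᵀ*X).mulVec (w k) - (Xᵀ*X).mulVec (w (k-1))) (v k - v (k+1)))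
        ≤ σ * normSq (w k - w (k-1)) + τ * normSq (v k - v (k+1)) := by
      have e : (Xᵀ*X).mulVec (w k) - (Xᵀ*X).mulVec (w (k-1))
          = (Xᵀ*X).mulVec (w k - w (k-1)) := (Matrix.mulVec_sub _ _ _).symm
      rw [e]
      set a := Real.sqrt (normSq (w k - w (k-1))) with ha
      set bb := Real.sqrt (normSq (v k - v (k+1))) with hbb
      have hb := K_mulVec_bound X (w k - w (k-1))
      rw [← hL] at hb
      have hdle : dotp ((Xᵀ*X).mulVec (w k - w (k-1))) (v k - v (k+1)) ≤ L*(a*bb) := by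
        calc dotp ((Xᵀ*X).mulVec (w k - w (k-1))) (v k - v (k+1))
            ≤ Real.sqrt (normSq ((Xᵀ*X).mulVec (w k - w (k-1)))) * bb := cauchy _ _
          _ ≤ (L*a) * bb := mul_le_mul_of_nonneg_right hb (Real.sqrt_nonneg _)
          _ = L*(a*bb) := by ring
      have h7 : σ*τ*dotp ((Xᵀ*X).mulVec (w k - w (k-1))) (v k - v (k+1)) ≤ σ*τ*(L*(a*bb)) :=
        mul_le_mul_of_nonneg_left hdle (by positivity)
      have ha2 : a^2 = normSq (w k - w (k-1)) := Real.sq_sqrt (normSq_nonneg' _)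
      have hb2 : bb^2 = normSq (v k - v (k+1)) := Real.sq_sqrt (normSq_nonneg' _)
      have h8 : 0 ≤ τ * (σ*L*a - bb)^2 := mul_nonneg hτ.le (sq_nonneg _)
      have h9 : τ*σ*L^2*(σ*a^2) ≤ 1*(σ*a^2) :=
        mul_le_mul_of_nonneg_right hstep.le (by positivity)
      nlinarith [h7, h8, h9]
    rw [IO1, INs] at hY
    linarith [hAτ, hBσ, I4, I5, Icross, hY]
  -- monotonicity gives boundedness of the Lyapunov function
  have Emono : ∀ k,
      τ * normSq (v k - vstar) + σ * normSq (w k - wstar)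
        + σ * normSq (w k - w (k-1))
        - 2*σ*τ * dotp ((Xᵀ*X).mulVec (w k) - (Xᵀ*X).mulVec (w (k-1))) (v k - vstar)
      ≤ τ * normSq (v 0 - vstar) + σ * normSq (w 0 - wstar) := by
    intro k
    induction k with
    | zero =>
        have e0 : w 0 - w (0-1) = 0 := by simp
        have e1 : (Xᵀ*X).mulVec (w 0) - (Xᵀ*X).mulVec (w (0-1)) = 0 := by simp
        rw [e0, e1]
        have h1 : normSq (0 : Fin p → ℝ) = 0 := by simp [normSq]
        have h2 : dotp (0 : Fin p → ℝ) (v 0 - vstar) = 0 := by simp [dotp]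
        rw [h1, h2]
        ring_nf
        exact le_refl _
    | succ j ih =>
        have h := hkey j
        simp only [Nat.add_sub_cancel]
        exact le_trans h ih
  -- conclusion
  intro N
  -- final Young step to absorb the residual terms
  have hYf : 2*(σ*τ*dotp ((Xᵀ*X).mulVec (w N) - (Xᵀ*X).mulVec (w (N-1))) (v N - vstar))
      ≤ σ * normSq (w N - w (N-1)) + τ*σ*L^2*(τ * normSq (v N - vstar)) := by
    have e : (Xᵀ*X).mulVec (w N) - (Xᵀ*X).mulVec (w (N-1))
        = (Xᵀ*X).mulVec (w N - w (N-1)) := (Matrix.mulVec_sub _ _ _).symm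
    rw [e]
    set a := Real.sqrt (normSq (w N - w (N-1))) with ha
    set bb := Real.sqrt (normSq (v N - vstar)) with hbb
    have hb := K_mulVec_bound X (w N - w (N-1))
    rw [← hL] at hb
    have hdle : dotp ((Xᵀ*X).mulVec (w N - w (N-1))) (v N - vstar) ≤ L*(a*bb) := by
      calc dotp ((Xᵀ*X).mulVec (w N - w (N-1))) (v N - vstar)
          ≤ Real.sqrt (normSq ((Xᵀ*X).mulVec (w N - w (N-1)))) * bb := cauchy _ _
        _ ≤ (L*a) * bb := mul_le_mul_of_nonneg_right hb (Real.sqrt_nonneg _)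
        _ = L*(a*bb) := by ring
    have h7 : σ*τ*dotp ((Xᵀ*X).mulVec (w N - w (N-1))) (v N - vstar) ≤ σ*τ*(L*(a*bb)) :=
      mul_le_mul_of_nonneg_left hdle (by positivity)
    have ha2 : a^2 = normSq (w N - w (N-1)) := Real.sq_sqrt (normSq_nonneg' _)
    have hb2 : bb^2 = normSq (v N - vstar) := Real.sq_sqrt (normSq_nonneg' _)
    have h8 : 0 ≤ σ * (a - τ*L*bb)^2 := mul_nonneg hσ.le (sq_nonneg _)
    rw [← ha2, ← hb2]
    nlinarith [h7, h8]
  have hNN : 0 ≤ τ*σ*L^2 * (σ * normSq (w N - wstar)) :=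
    mul_nonneg hθ0 (mul_nonneg hσ.le (normSq_nonneg' _))
  have key2 : (1 - τ*σ*L^2) * (τ * normSq (v N - vstar) + σ * normSq (w N - wstar))
      ≤ τ * normSq (v 0 - vstar) + σ * normSq (w 0 - wstar) := by
    have hE := Emono N
    nlinarith [hE, hYf, hNN]
  have h1θ : 0 < 1 - τ*σ*L^2 := by linarith
  have expand : ∀ A B : ℝ, A/τ + B/σ = (σ*A + τ*B)/(τ*σ) := by
    intro A B; field_simp
  rw [expand, expand]
  have eR : (1 / (1 - τ * σ * L ^ 2)) * ((σ * normSq (w 0 - wstar) + τ * normSq (v 0 - vstar))/(τ*σ))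
      = (σ * normSq (w 0 - wstar) + τ * normSq (v 0 - vstar)) / ((1 - τ*σ*L^2)*(τ*σ)) := by
    field_simp
  rw [eR, div_le_div_iff₀ (by positivity) (by positivity)]
  have key3 := mul_le_mul_of_nonneg_left key2 (le_of_lt (mul_pos hτ hσ))
  nlinarith [key3]
end
end

section
/- In the setting of the primal-dual iteration with fixed stepsizes τ₀, σ₀ > 0 satisfying τ₀σ₀L² ≤ 1 (v_{k+1} = prox_{σ₀ G}(v_k + σ₀(Xᵀy − XᵀX w'_k)), w_{k+1} = prox_{τ₀ F}(w_k + τ₀ XᵀX v_{k+1}), w'_{k+1} = 2 w_{k+1} − w_k, w'_0 = w_0), suppose (w*, v*) is a saddle point of φ(w, v) = ⟨Xᵀ(y − Xw), v⟩ + F(w) − G(v). Define the averaged iterates w̄_k = (1/k)Σ_{i=1}^k w_i and v̄_k = (1/k)Σ_{i=1}^k v_i. Then for any (w, v), the primal-dual gap satisfies [⟨Xᵀ(y − X w̄_k), v⟩ + F(w̄_k) − G(v)] − [⟨Xᵀ(y − Xw), v̄_k⟩ + F(w) − G(v̄_k)] ≤ (1/k)( ‖v − v₀‖²/(2σ₀)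 + ‖w − w₀‖²/(2τ₀) ), and in particular with C = 1/(1 − τ₀σ₀L²), the gap evaluated at (w*, v*)-centered balls is bounded by ((1+C)/k)( ‖w* − w₀‖²/(2τ₀) + ‖v* − v₀‖²/(2σ₀) ). Moreover, every limit point of the sequence (w̄_k, v̄_k) is a saddle point of φ. -/
open Matrix Finset

noncomputable section

/-- Averaged iterates: `w̄_k = (1/k) ∑_{i=1}^k w_i`. -/
def avgIter {p : ℕ} (w : ℕ → Fin p → ℝ) (k : ℕ) : Fin p → ℝ :=
  (k : ℝ)⁻¹ • ∑ i ∈ Finset.Icc 1 k, w i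

/-!
The argument is the ergodic analysis of Chambolle and Pock. Each proximal step obeys a
three-point inequality. Adding the primal and the dual one, the bilinear terms of the gap
`ℓ(w_{j+1}, v) - ℓ(w, v_{j+1})` of the Lagrangian `ℓ` leave `⟨K(w'_j - w_{j+1}), v - v_{j+1}⟩`
with `K = XᵀX`; the extrapolation `w'_j = 2w_j - w_{j-1}` splits it into a telescoping part and
a cross term that Young's inequality absorbs when `τσL² ≤ 1`. So the gaps telescope against a
Lyapunov function which is nonnegative and starts at `‖w - w₀‖²/(2τ) + ‖v - v₀‖²/(2σ)`, and
Jensen's inequality passes the averaged sum to the averaged iterates. The gap is lower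
semicontinuous, so it is nonpositive at every cluster point of the averages, which is the saddle
property. The bound at the saddle point is the general one, as `1 / (1 - τσL²) ≥ 0`.
-/

open Filter Topology

lemma sum_Icc_one_inv_natCast {k : ℕ} (hk : k ≠ 0) : ∑ _i ∈ Icc 1 k, (k : ℝ)⁻¹ = 1 := by
  simp [hk]

section Euclidean

variable {p : ℕ}

lemma dotp_eq_dotProduct (x y : Fin p → ℝ) : dotp x y = x ⬝ᵥ y := rfl

lemma normSq_eq_dotProduct (x : Fin p → ℝ) : normSq x = x ⬝ᵥ x := by
  simp only [normSq, dotProduct, sq]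

lemma normSq_nonneg (x : Fin p → ℝ) : 0 ≤ normSq x :=
  sum_nonneg fun i _ => sq_nonneg (x i)

lemma normSq_neg (x : Fin p → ℝ) : normSq (-x) = normSq x := by
  simp [normSq]

lemma normSq_sub_comm (x y : Fin p → ℝ) : normSq (x - y) = normSq (y - x) := by
  rw [← normSq_neg, neg_sub]

lemma normSq_sub_add_smul (x z d : Fin p → ℝ) (t : ℝ) :
    normSq (x - (z + t • d)) = normSq (x - z) - 2 * t * dotp (x - z) d + t ^ 2 * normSq d := by
  simp only [normSq_eq_dotProduct, dotp_eq_dotProduct, ← sub_sub, sub_dotProduct, dotProduct_sub,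
    smul_dotProduct, dotProduct_smul, smul_eq_mul, dotProduct_comm d]
  ring

end Euclidean

section Prox

variable {p : ℕ} {s : Set (Fin p → ℝ)} {h : (Fin p → ℝ) → ℝ}

lemma prox_three_point (hh : ConvexOn ℝ s h) {z m u : Fin p → ℝ} (hm : m ∈ s) (hu : u ∈ s)
    (hmin : ∀ x ∈ s, normSq (m - z) / 2 + h m ≤ normSq (x - z) / 2 + h x) :
    normSq (m - z) / 2 + h m + normSq (u - m) / 2 ≤ normSq (u - z) / 2 + h u := by
  have hexpand : ∀ t : ℝ, normSq (m + t • (u - m) - z)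
      = normSq (m - z) + 2 * t * dotp (m - z) (u - m) + t ^ 2 * normSq (u - m) := by
    intro t
    rw [show m + t • (u - m) - z = m - (z + (-t) • (u - m)) by module, normSq_sub_add_smul]
    ring
  set c := dotp (m - z) (u - m) + (h u - h m)
  -- compare `m` with the points `m + t (u - m)` of the segment and let `t → 0`
  have hseg : ∀ t ∈ Set.Ioc (0 : ℝ) 1, 0 ≤ c + t * (normSq (u - m) / 2) := by
    rintro t ⟨ht0, ht1⟩
    have hconv : h (m + t • (u - m)) ≤ (1 - t) * h m + t * h u := by
      rw [show m + t • (u - m) = (1 - t) • m + t • u by module]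
      exact hh.2 hm hu (by linarith) ht0.le (by ring)
    have hopt := hmin _ (hh.1.add_smul_sub_mem hm hu ⟨ht0.le, ht1⟩)
    rw [hexpand] at hopt
    nlinarith
  have hc : 0 ≤ c := by
    have hlim : Tendsto (fun t : ℝ => c + t * (normSq (u - m) / 2)) (𝓝[>] 0) (𝓝 c) :=
      ((continuous_const.add (continuous_id.mul continuous_const)).tendsto' 0 c
        (by simp [c])).mono_left nhdsWithin_le_nhds
    exact ge_of_tendsto hlim (by filter_upwards [Ioc_mem_nhdsGT one_pos] using hseg)
  have := hexpand 1
  simp only [one_smul, add_sub_cancel, one_pow, one_mul, mul_one] at this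
  linarith

lemma prox_inequality (hh : ConvexOn ℝ s h) {t : ℝ} (ht : 0 < t) {z d m u : Fin p → ℝ}
    (hm : m ∈ s) (hu : u ∈ s)
    (hmin : ∀ x ∈ s, normSq (m - (z + t • d)) / 2 + t * h m
      ≤ normSq (x - (z + t • d)) / 2 + t * h x) :
    h m - h u - dotp d (m - u) ≤ (normSq (u - z) - normSq (u - m) - normSq (m - z)) / (2 * t) := by
  have h3 := prox_three_point (hh.smul ht.le) hm hu hmin
  simp only [smul_eq_mul, normSq_sub_add_smul] at h3
  rw [le_div_iff₀ (by positivity), show dotp d (m - u) = dotp (m - z) d - dotp (u - z) d by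
    simp only [dotp_eq_dotProduct, sub_dotProduct, dotProduct_comm d]; ring]
  nlinarith

end Prox

section OperatorNorm

variable {m k : Type} [Fintype m] [Fintype k]

lemma sum_sq_smul (c : ℝ) (z : k → ℝ) : ∑ i, (c • z) i ^ 2 = c ^ 2 * ∑ i, z i ^ 2 := by
  simp only [Pi.smul_apply, smul_eq_mul, mul_pow, mul_sum]

lemma bddAbove_opNorm_set (A : Matrix m k ℝ) :
    BddAbove {c | ∃ z : k → ℝ, (∑ i, z i ^ 2) ≤ 1 ∧ c = √(∑ i, (A *ᵥ z) i ^ 2)} := by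
  refine ⟨√(∑ i, ∑ j, A i j ^ 2), ?_⟩
  rintro c ⟨z, hz, rfl⟩
  refine Real.sqrt_le_sqrt (sum_le_sum fun i _ => ?_)
  calc (A *ᵥ z) i ^ 2 ≤ (∑ j, A i j ^ 2) * ∑ j, z j ^ 2 := sum_mul_sq_le_sq_mul_sq _ _ _
    _ ≤ ∑ j, A i j ^ 2 := mul_le_of_le_one_right (sum_nonneg fun j _ => sq_nonneg _) hz

lemma sqrt_sum_sq_mulVec_le (A : Matrix m k ℝ) (z : k → ℝ) :
    √(∑ i, (A *ᵥ z) i ^ 2) ≤ opNorm A * √(∑ i, z i ^ 2) := by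
  rcases (Real.sqrt_nonneg (∑ i, z i ^ 2)).eq_or_lt with hr | hr
  · have hz : z = 0 := by
      have := (sum_eq_zero_iff_of_nonneg fun i _ => sq_nonneg (z i)).1
        ((Real.sqrt_eq_zero (sum_nonneg fun i _ => sq_nonneg _)).1 hr.symm)
      funext i
      simpa using this i (mem_univ i)
    simp [hz]
  · set r := √(∑ i, z i ^ 2)
    have hunit : √(∑ i, (A *ᵥ (r⁻¹ • z)) i ^ 2) ≤ opNorm A := by
      refine le_csSup (bddAbove_opNorm_set A) ⟨r⁻¹ • z, ?_, rfl⟩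
      rw [sum_sq_smul, inv_pow, Real.sq_sqrt (sum_nonneg fun i _ => sq_nonneg _)]
      exact (inv_mul_cancel₀ (Real.sqrt_pos.1 hr).ne').le
    rw [mulVec_smul, sum_sq_smul, Real.sqrt_mul (sq_nonneg _), Real.sqrt_sq (inv_nonneg.2 hr.le),
      inv_mul_le_iff₀ hr] at hunit
    linarith

end OperatorNorm

/-- `(XᵀX) z = Xᵀ[I, -X] (0, -z)`. -/
lemma sqrt_normSq_gram_mulVec_le {n p : ℕ} (X : Matrix (Fin n) (Fin p) ℝ) (z : Fin p → ℝ) :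
    √(normSq ((Xᵀ * X) *ᵥ z))
      ≤ opNorm (Xᵀ * fromCols (1 : Matrix (Fin n) (Fin n) ℝ) (-X)) * √(normSq z) := by
  have hA : (Xᵀ * fromCols (1 : Matrix (Fin n) (Fin n) ℝ) (-X)) *ᵥ Sum.elim 0 (-z)
      = (Xᵀ * X) *ᵥ z := by
    rw [← mulVec_mulVec, fromCols_mulVec_sumElim, one_mulVec, neg_mulVec, mulVec_neg, neg_neg,
      zero_add, mulVec_mulVec]
  have hz : ∑ i, Sum.elim (0 : Fin n → ℝ) (-z) i ^ 2 = normSq z := by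
    simp [Fintype.sum_sum_type, normSq]
  have := sqrt_sum_sq_mulVec_le (Xᵀ * fromCols (1 : Matrix (Fin n) (Fin n) ℝ) (-X))
    (Sum.elim 0 (-z))
  rw [hA, hz] at this
  exact this

/-- `σa² + τb² - 2τσLab = σ(a - τLb)² + τ(1 - τσL²)b²`. -/
lemma mul_mul_le_sq_div_add_sq_div {τ σ L : ℝ} (hτ : 0 < τ) (hσ : 0 < σ)
    (hstep : τ * σ * L ^ 2 ≤ 1) (a b : ℝ) :
    L * a * b ≤ a ^ 2 / (2 * τ) + b ^ 2 / (2 * σ) := by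
  rw [div_add_div _ _ (by positivity) (by positivity), le_div_iff₀ (by positivity)]
  nlinarith [mul_nonneg hσ.le (sq_nonneg (a - τ * L * b)),
    mul_nonneg hτ.le (mul_nonneg (sub_nonneg.2 hstep) (sq_nonneg b))]

lemma dotp_mulVec_le {p : ℕ} {K : Matrix (Fin p) (Fin p) ℝ} {τ σ L : ℝ} (hτ : 0 < τ)
    (hσ : 0 < σ) (hstep : τ * σ * L ^ 2 ≤ 1) (hK : ∀ z, √(normSq (K *ᵥ z)) ≤ L * √(normSq z))
    (d u : Fin p → ℝ) :
    dotp (K *ᵥ d) u ≤ normSq d / (2 * τ) + normSq u / (2 * σ) := by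
  calc dotp (K *ᵥ d) u ≤ √(normSq (K *ᵥ d)) * √(normSq u) :=
        Real.sum_mul_le_sqrt_mul_sqrt univ _ _
    _ ≤ L * √(normSq d) * √(normSq u) := mul_le_mul_of_nonneg_right (hK d) (Real.sqrt_nonneg _)
    _ ≤ √(normSq d) ^ 2 / (2 * τ) + √(normSq u) ^ 2 / (2 * σ) :=
      mul_mul_le_sq_div_add_sq_div hτ hσ hstep _ _
    _ = normSq d / (2 * τ) + normSq u / (2 * σ) := by
      rw [Real.sq_sqrt (normSq_nonneg d), Real.sq_sqrt (normSq_nonneg u)]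

section PrimalDual

variable {p : ℕ} (K : Matrix (Fin p) (Fin p) ℝ) (b : Fin p → ℝ) (f g : (Fin p → ℝ) → ℝ)

def lagrangian (w v : Fin p → ℝ) : ℝ := dotp (b - K *ᵥ w) v + f w - g v

/-- Each proximal step is written as the minimality of its objective; the primal one minimises
over `s`, the domain on which `f` represents the extended-valued function. -/
structure IsPrimalDualSeq (s : Set (Fin p → ℝ)) (τ σ : ℝ) (w v w' : ℕ → Fin p → ℝ) : Prop where
  dual_prox : ∀ k u, normSq (v (k + 1) - (v k + σ • (b - K *ᵥ w' k))) / 2 + σ * g (v (k + 1))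
    ≤ normSq (u - (v k + σ • (b - K *ᵥ w' k))) / 2 + σ * g u
  primal_mem : ∀ k, w (k + 1) ∈ s
  primal_prox : ∀ k, ∀ u ∈ s,
    normSq (w (k + 1) - (w k + τ • (K *ᵥ v (k + 1)))) / 2 + τ * f (w (k + 1))
      ≤ normSq (u - (w k + τ • (K *ᵥ v (k + 1)))) / 2 + τ * f u
  extrapolate_zero : w' 0 = w 0
  extrapolate_succ : ∀ k, w' (k + 1) = (2 : ℝ) • w (k + 1) - w k

/-- At `j = 0` the truncated `j - 1` makes the increment `w j - w (j - 1)` vanish. -/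
def lyapunov (τ σ : ℝ) (w v : ℕ → Fin p → ℝ) (ww vv : Fin p → ℝ) (j : ℕ) : ℝ :=
  normSq (ww - w j) / (2 * τ) + normSq (vv - v j) / (2 * σ)
    + dotp (K *ᵥ (w j - w (j - 1))) (vv - v j) + normSq (w j - w (j - 1)) / (2 * τ)

variable {K b f g}

lemma convexOn_lagrangian_left {s : Set (Fin p → ℝ)} (hf : ConvexOn ℝ s f) (v : Fin p → ℝ) :
    ConvexOn ℝ s (fun w => lagrangian K b f g w v) := by
  refine ⟨hf.1, fun x hx z hz a c ha hc hac => ?_⟩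
  have := hf.2 hx hz ha hc hac
  simp only [lagrangian, dotp_eq_dotProduct, smul_eq_mul, mulVec_add, mulVec_smul,
    sub_dotProduct, add_dotProduct, smul_dotProduct] at this ⊢
  linear_combination this - (b ⬝ᵥ v - g v) * hac

lemma concaveOn_lagrangian_right (hg : ConvexOn ℝ Set.univ g) (w : Fin p → ℝ) :
    ConcaveOn ℝ Set.univ (fun v => lagrangian K b f g w v) := by
  refine ⟨convex_univ, fun x hx z hz a c ha hc hac => ?_⟩
  have := hg.2 hx hz ha hc hac
  simp only [lagrangian, dotp_eq_dotProduct, smul_eq_mul, dotProduct_add, dotProduct_smul] at this ⊢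
  linear_combination this + (f w) * hac

lemma dotp_mulVec_comm (hK : Kᵀ = K) (x z : Fin p → ℝ) : dotp (K *ᵥ x) z = dotp (K *ᵥ z) x := by
  rw [dotp_eq_dotProduct, dotp_eq_dotProduct, dotProduct_comm, dotProduct_mulVec,
    ← mulVec_transpose, hK]

lemma lagrangian_sub_eq (hK : Kᵀ = K) (w₁ v₁ w' ww vv : Fin p → ℝ) :
    lagrangian K b f g w₁ vv - lagrangian K b f g ww v₁
      = (f w₁ - f ww - dotp (K *ᵥ v₁) (w₁ - ww))
        + (g v₁ - g vv - dotp (b - K *ᵥ w') (v₁ - vv))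
        + dotp (K *ᵥ (w' - w₁)) (vv - v₁) := by
  have h₁ := dotp_mulVec_comm hK v₁ w₁
  have h₂ := dotp_mulVec_comm hK v₁ ww
  simp only [lagrangian, dotp_eq_dotProduct, mulVec_sub, dotProduct_sub, sub_dotProduct] at h₁ h₂ ⊢
  linarith

lemma lyapunov_zero (τ σ : ℝ) (w v : ℕ → Fin p → ℝ) (ww vv : Fin p → ℝ) :
    lyapunov K τ σ w v ww vv 0 = normSq (ww - w 0) / (2 * τ) + normSq (vv - v 0) / (2 * σ) := by
  simp [lyapunov, dotp_eq_dotProduct, normSq_eq_dotProduct]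

lemma lyapunov_nonneg {τ σ : ℝ} (hτ : 0 < τ)
    (hKb : ∀ d u, dotp (K *ᵥ d) u ≤ normSq d / (2 * τ) + normSq u / (2 * σ))
    (w v : ℕ → Fin p → ℝ) (ww vv : Fin p → ℝ) (j : ℕ) :
    0 ≤ lyapunov K τ σ w v ww vv j := by
  have hcross := hKb (w j - w (j - 1)) (-(vv - v j))
  rw [dotp_eq_dotProduct, dotProduct_neg, ← dotp_eq_dotProduct, normSq_neg] at hcross
  have := div_nonneg (normSq_nonneg (ww - w j)) (by positivity : (0 : ℝ) ≤ 2 * τ)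
  unfold lyapunov
  linarith

lemma lagrangian_avgIter_sub_le_average {s : Set (Fin p → ℝ)} (hf : ConvexOn ℝ s f)
    (hg : ConvexOn ℝ Set.univ g) {w v : ℕ → Fin p → ℝ} {k : ℕ} (hk : k ≠ 0)
    (hw : ∀ i ∈ Icc 1 k, w i ∈ s) (ww vv : Fin p → ℝ) :
    lagrangian K b f g (avgIter w k) vv - lagrangian K b f g ww (avgIter v k)
      ≤ (k : ℝ)⁻¹ * ∑ i ∈ Icc 1 k, (lagrangian K b f g (w i) vv - lagrangian K b f g ww (v i)) := by
  have hweights := sum_Icc_one_inv_natCast hk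
  have hnonneg : ∀ i ∈ Icc 1 k, (0 : ℝ) ≤ (k : ℝ)⁻¹ := fun _ _ => by positivity
  have hl := (convexOn_lagrangian_left (K := K) (b := b) (g := g) hf vv).map_sum_le hnonneg
    hweights hw
  have hr := (concaveOn_lagrangian_right (K := K) (b := b) (f := f) hg ww).le_map_sum hnonneg
    hweights fun i _ => Set.mem_univ (v i)
  simp only [avgIter, smul_sum, mul_sum, mul_sub, sum_sub_distrib, smul_eq_mul] at hl hr ⊢
  linarith

namespace IsPrimalDualSeq

variable {s : Set (Fin p → ℝ)} {τ σ : ℝ} {w v w' : ℕ → Fin p → ℝ}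

lemma extrapolate_eq (hpd : IsPrimalDualSeq K b f g s τ σ w v w') (j : ℕ) :
    w' j = w j + (w j - w (j - 1)) := by
  cases j with
  | zero => simp [hpd.extrapolate_zero]
  | succ j => rw [hpd.extrapolate_succ, Nat.add_sub_cancel, two_smul]; abel

lemma primal_mem_of_one_le (hpd : IsPrimalDualSeq K b f g s τ σ w v w') {i : ℕ} (hi : 1 ≤ i) :
    w i ∈ s := by
  simpa [Nat.sub_add_cancel hi] using hpd.primal_mem (i - 1)

lemma avgIter_mem (hpd : IsPrimalDualSeq K b f g s τ σ w v w') (hs : Convex ℝ s) {k : ℕ}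
    (hk : 1 ≤ k) : avgIter w k ∈ s := by
  rw [avgIter, smul_sum]
  exact hs.sum_mem (fun _ _ => by positivity) (sum_Icc_one_inv_natCast (by omega))
    fun i hi => hpd.primal_mem_of_one_le (mem_Icc.1 hi).1

lemma lagrangian_sub_le_lyapunov_sub (hpd : IsPrimalDualSeq K b f g s τ σ w v w')
    (hf : ConvexOn ℝ s f) (hg : ConvexOn ℝ Set.univ g) (hK : Kᵀ = K)
    (hKb : ∀ d u, dotp (K *ᵥ d) u ≤ normSq d / (2 * τ) + normSq u / (2 * σ))
    (hτ : 0 < τ) (hσ : 0 < σ) {ww : Fin p → ℝ} (hww : ww ∈ s) (vv : Fin p → ℝ) (j : ℕ) :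
    lagrangian K b f g (w (j + 1)) vv - lagrangian K b f g ww (v (j + 1))
      ≤ lyapunov K τ σ w v ww vv j - lyapunov K τ σ w v ww vv (j + 1) := by
  have hprimal := prox_inequality hf hτ (hpd.primal_mem j) hww (hpd.primal_prox j)
  have hdual := prox_inequality hg hσ (Set.mem_univ _) (Set.mem_univ vv)
    fun x _ => hpd.dual_prox j x
  have hcross := hKb (w j - w (j - 1)) (v j - v (j + 1))
  rw [normSq_sub_comm (v j)] at hcross
  have hcoupling : dotp (K *ᵥ (w' j - w (j + 1))) (vv - v (j + 1))
      = dotp (K *ᵥ (w j - w (j - 1))) (vv - v j)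
        - dotp (K *ᵥ (w (j + 1) - w j)) (vv - v (j + 1))
        + dotp (K *ᵥ (w j - w (j - 1))) (v j - v (j + 1)) := by
    rw [hpd.extrapolate_eq j]
    simp only [dotp_eq_dotProduct, mulVec_add, mulVec_sub, sub_dotProduct, add_dotProduct,
      dotProduct_sub]
    ring
  rw [lagrangian_sub_eq hK _ _ (w' j), hcoupling]
  simp only [sub_div] at hprimal hdual
  simp only [lyapunov, Nat.add_sub_cancel]
  linarith

lemma sum_lagrangian_sub_le (hpd : IsPrimalDualSeq K b f g s τ σ w v w')
    (hf : ConvexOn ℝ s f) (hg : ConvexOn ℝ Set.univ g) (hK : Kᵀ = K)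
    (hKb : ∀ d u, dotp (K *ᵥ d) u ≤ normSq d / (2 * τ) + normSq u / (2 * σ))
    (hτ : 0 < τ) (hσ : 0 < σ) {ww : Fin p → ℝ} (hww : ww ∈ s) (vv : Fin p → ℝ) (k : ℕ) :
    ∑ i ∈ Icc 1 k, (lagrangian K b f g (w i) vv - lagrangian K b f g ww (v i))
      ≤ lyapunov K τ σ w v ww vv 0 - lyapunov K τ σ w v ww vv k := by
  induction k with
  | zero => simp
  | succ k ih =>
    rw [sum_Icc_succ_top (by omega)]
    linarith [hpd.lagrangian_sub_le_lyapunov_sub hf hg hK hKb hτ hσ hww vv k]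

theorem lagrangian_avgIter_sub_le (hpd : IsPrimalDualSeq K b f g s τ σ w v w')
    (hf : ConvexOn ℝ s f) (hg : ConvexOn ℝ Set.univ g) (hK : Kᵀ = K)
    (hKb : ∀ d u, dotp (K *ᵥ d) u ≤ normSq d / (2 * τ) + normSq u / (2 * σ))
    (hτ : 0 < τ) (hσ : 0 < σ) {k : ℕ} (hk : 1 ≤ k) {ww : Fin p → ℝ} (hww : ww ∈ s)
    (vv : Fin p → ℝ) :
    lagrangian K b f g (avgIter w k) vv - lagrangian K b f g ww (avgIter v k)
      ≤ 1 / (k : ℝ) * (normSq (vv - v 0) / (2 * σ) + normSq (ww - w 0) / (2 * τ)) := by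
  have hsum := hpd.sum_lagrangian_sub_le hf hg hK hKb hτ hσ hww vv k
  have hlast := lyapunov_nonneg hτ hKb w v ww vv k
  rw [lyapunov_zero] at hsum
  calc _ ≤ (k : ℝ)⁻¹ * ∑ i ∈ Icc 1 k,
        (lagrangian K b f g (w i) vv - lagrangian K b f g ww (v i)) :=
        lagrangian_avgIter_sub_le_average hf hg (by omega)
          (fun i hi => hpd.primal_mem_of_one_le (mem_Icc.1 hi).1) ww vv
    _ ≤ 1 / (k : ℝ) * (normSq (vv - v 0) / (2 * σ) + normSq (ww - w 0) / (2 * τ)) := by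
        rw [one_div]
        gcongr
        linarith

end IsPrimalDualSeq

end PrimalDual

section Extended

variable {p : ℕ}

lemma IsNorm.convexOn {G : (Fin p → ℝ) → ℝ} (hG : IsNorm G) : ConvexOn ℝ Set.univ G :=
  ⟨convex_univ, fun x _ z _ a b ha hb _ => (hG.2.2 _ _).trans <| by
    rw [hG.2.1, hG.2.1, abs_of_nonneg ha, abs_of_nonneg hb]; rfl⟩

lemma IsNorm.continuous {G : (Fin p → ℝ) → ℝ} (hG : IsNorm G) : Continuous G :=
  hG.convexOn.locallyLipschitz.continuous

variable {F : (Fin p → ℝ) → EReal}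

lemma ProperConvexLsc.convexOn_toReal (hF : ProperConvexLsc F) :
    ConvexOn ℝ {w | F w ≠ ⊤} (fun w => (F w).toReal) := by
  have hcomb : ∀ x ∈ {w | F w ≠ ⊤}, ∀ z ∈ {w | F w ≠ ⊤}, ∀ a b : ℝ, 0 ≤ a → 0 ≤ b → a + b = 1 →
      F (a • x + b • z) ≤ ((a * (F x).toReal + b * (F z).toReal : ℝ) : EReal) := by
    intro x hx z hz a b ha hb hab
    rw [EReal.coe_add, EReal.coe_mul, EReal.coe_mul, EReal.coe_toReal hx (hF.1 x),
      EReal.coe_toReal hz (hF.1 z)]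
    exact hF.2.2.1 x z a b ha hb hab
  refine ⟨fun x hx z hz a b ha hb hab => ne_top_of_le_ne_top (EReal.coe_ne_top _)
    (hcomb x hx z hz a b ha hb hab), fun x hx z hz a b ha hb hab => ?_⟩
  exact (EReal.toReal_le_toReal (hcomb x hx z hz a b ha hb hab) (hF.1 _)
    (EReal.coe_ne_top _)).trans_eq (EReal.toReal_coe _)

lemma ProperConvexLsc.prox_toReal (hF : ProperConvexLsc F) {t : ℝ} (ht : 0 < t)
    {m z : Fin p → ℝ}
    (hmin : ∀ u, ((normSq (m - z) / 2 : ℝ) : EReal) + (t : EReal) * F m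
      ≤ ((normSq (u - z) / 2 : ℝ) : EReal) + (t : EReal) * F u) :
    F m ≠ ⊤ ∧ ∀ u ∈ {w | F w ≠ ⊤},
      normSq (m - z) / 2 + t * (F m).toReal ≤ normSq (u - z) / 2 + t * (F u).toReal := by
  have hcoe : ∀ u, F u ≠ ⊤ → ((normSq (u - z) / 2 : ℝ) : EReal) + (t : EReal) * F u
      = ((normSq (u - z) / 2 + t * (F u).toReal : ℝ) : EReal) := fun u hu => by
    rw [EReal.coe_add, EReal.coe_mul, EReal.coe_toReal hu (hF.1 u)]
  obtain ⟨u₀, hu₀⟩ := hF.2.1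
  have hm : F m ≠ ⊤ := fun htop => by
    have := hmin u₀
    rw [htop, EReal.coe_mul_top_of_pos ht, EReal.coe_add_top, hcoe u₀ hu₀] at this
    exact (EReal.coe_lt_top _).not_ge this
  refine ⟨hm, fun u hu => ?_⟩
  have := hmin u
  rwa [hcoe m hm, hcoe u hu, EReal.coe_le_coe_iff] at this

variable {n : ℕ} (X : Matrix (Fin n) (Fin p) ℝ) (y : Fin n → ℝ) (G : (Fin p → ℝ) → ℝ)

lemma phi_eq_top {w : Fin p → ℝ} (hw : F w = ⊤) (v : Fin p → ℝ) : phi X y F G w v = ⊤ := by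
  rw [phi, hw, EReal.coe_add_top, EReal.top_sub_coe]

lemma phi_eq_lagrangian {w : Fin p → ℝ} (hbot : F w ≠ ⊥) (htop : F w ≠ ⊤) (v : Fin p → ℝ) :
    phi X y F G w v
      = (lagrangian (Xᵀ * X) (Xᵀ *ᵥ y) (fun w => (F w).toReal) G w v : EReal) := by
  rw [lagrangian, EReal.coe_sub, EReal.coe_add, EReal.coe_toReal htop hbot, phi, mulVec_sub,
    mulVec_mulVec]

end Extended

lemma LowerSemicontinuousAt.le_of_mapClusterPt {α ι β : Type*} [TopologicalSpace α]
    [LinearOrder β] {f : α → β} {x : α} {l : Filter ι} {u : ι → α}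
    (hf : LowerSemicontinuousAt f x) (hx : MapClusterPt x l u) {c : β}
    (hc : ∀ᶠ i in l, f (u i) ≤ c) : f x ≤ c := by
  by_contra! hlt
  obtain ⟨i, hlt', hle⟩ :=
    ((mapClusterPt_iff_frequently.1 hx _ (hf c hlt)).and_eventually hc).exists
  exact hlt'.not_ge hle

section Gap

variable {n p : ℕ} {X : Matrix (Fin n) (Fin p) ℝ} {y : Fin n → ℝ}
  {F : (Fin p → ℝ) → EReal} {G : (Fin p → ℝ) → ℝ}

theorem phi_avgIter_sub_le (hF : ProperConvexLsc F) (hG : IsNorm G) {τ σ : ℝ}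
    {w v w' : ℕ → Fin p → ℝ}
    (hpd : IsPrimalDualSeq (Xᵀ * X) (Xᵀ *ᵥ y) (fun w => (F w).toReal) G {w | F w ≠ ⊤} τ σ w v w')
    (hKb : ∀ d u, dotp ((Xᵀ * X) *ᵥ d) u ≤ normSq d / (2 * τ) + normSq u / (2 * σ))
    (hτ : 0 < τ) (hσ : 0 < σ) {k : ℕ} (hk : 1 ≤ k) (ww vv : Fin p → ℝ) :
    phi X y F G (avgIter w k) vv - phi X y F G ww (avgIter v k)
      ≤ ((1 / (k : ℝ) * (normSq (vv - v 0) / (2 * σ) + normSq (ww - w 0) / (2 * τ)) : ℝ)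
        : EReal) := by
  by_cases hww : F ww = ⊤
  · rw [phi_eq_top X y G hww, EReal.sub_top]
    exact bot_le
  have hFconv := hF.convexOn_toReal
  rw [phi_eq_lagrangian X y G (hF.1 _) (hpd.avgIter_mem hFconv.1 hk),
    phi_eq_lagrangian X y G (hF.1 _) hww, ← EReal.coe_sub, EReal.coe_le_coe_iff]
  exact hpd.lagrangian_avgIter_sub_le hFconv hG.convexOn
    (by rw [transpose_mul, transpose_transpose]) hKb hτ hσ hk hww vv

theorem isSaddle_of_mapClusterPt (hF : ProperConvexLsc F) (hG : IsNorm G)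
    {a c : ℕ → Fin p → ℝ}
    (hgap : ∀ ww vv : Fin p → ℝ, ∀ ε : ℝ, 0 < ε →
      ∀ᶠ k in atTop, phi X y F G (a k) vv - phi X y F G ww (c k) ≤ ε)
    {wh vh : Fin p → ℝ} (hclus : MapClusterPt (wh, vh) atTop fun k => (a k, c k)) :
    IsSaddle X y F G wh vh := by
  suffices h : ∀ ww vv, phi X y F G wh vv ≤ phi X y F G ww vh from
    fun ww vv => ⟨h wh vv, h ww vh⟩
  intro ww vv
  by_cases hww : F ww = ⊤
  · rw [phi_eq_top X y G hww]
    exact le_top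
  set ℓ := lagrangian (Xᵀ * X) (Xᵀ *ᵥ y) (fun w => (F w).toReal) G
  set ρ : (Fin p → ℝ) × (Fin p → ℝ) → ℝ :=
    fun q => dotp (Xᵀ *ᵥ (y - X *ᵥ q.1)) vv - G vv - ℓ ww q.2
  -- the gap is `F` plus a continuous function, hence lower semicontinuous
  have hgap_eq : ∀ q : (Fin p → ℝ) × (Fin p → ℝ),
      phi X y F G q.1 vv - phi X y F G ww q.2 = F q.1 + (ρ q : EReal) := fun q => by
    rw [phi_eq_lagrangian X y G (hF.1 ww) hww]
    simp only [phi, ρ, sub_eq_add_neg, ← EReal.coe_neg, EReal.coe_add]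
    abel
  have hρ : Continuous ρ := by
    have hGc := hG.continuous
    simp only [ρ, ℓ, lagrangian, dotp, mulVec, dotProduct]
    fun_prop
  have hlsc : LowerSemicontinuous fun q : (Fin p → ℝ) × (Fin p → ℝ) => F q.1 + (ρ q : EReal) :=
    (hF.2.2.2.comp continuous_fst).add' (continuous_coe_real_ereal.comp hρ).lowerSemicontinuous
      fun q => EReal.continuousAt_add (Or.inr (EReal.coe_ne_bot _)) (Or.inr (EReal.coe_ne_top _))
  have hle : F wh + (ρ (wh, vh) : EReal) ≤ 0 := by
    refine EReal.le_of_forall_lt_iff_le.1 fun ε hε =>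
      LowerSemicontinuousAt.le_of_mapClusterPt (hlsc (wh, vh)) hclus ?_
    filter_upwards [hgap ww vv ε (EReal.coe_pos.1 hε)] with k hk
    rwa [← hgap_eq (a k, c k)]
  have hwh : F wh ≠ ⊤ := fun htop => by
    rw [htop, EReal.top_add_coe] at hle
    exact absurd hle (by simp)
  rw [← hgap_eq (wh, vh), phi_eq_lagrangian X y G (hF.1 wh) hwh,
    phi_eq_lagrangian X y G (hF.1 ww) hww, ← EReal.coe_sub, EReal.coe_nonpos] at hle
  rw [phi_eq_lagrangian X y G (hF.1 wh) hwh, phi_eq_lagrangian X y G (hF.1 ww) hww,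
    EReal.coe_le_coe_iff]
  linarith

end Gap

theorem pdsp_ergodic_general {n p : ℕ} (X : Matrix (Fin n) (Fin p) ℝ) (y : Fin n → ℝ)
    (F : (Fin p → ℝ) → EReal) (G : (Fin p → ℝ) → ℝ)
    (hF : ProperConvexLsc F) (hG : IsNorm G)
    (L : ℝ) (hL : L = opNorm (Xᵀ * fromCols (1 : Matrix (Fin n) (Fin n) ℝ) (-X)))
    (τ σ : ℝ) (hτ : 0 < τ) (hσ : 0 < σ) (hstep : τ * σ * L ^ 2 ≤ 1)
    (w v w' : ℕ → Fin p → ℝ)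
    (hw'0 : w' 0 = w 0)
    -- v_{k+1} = prox_{σ G}(v_k + σ(Xᵀy − XᵀX w'_k))
    (hv : ∀ k, ∀ u : Fin p → ℝ,
      normSq (v (k+1) - (v k + σ • (Xᵀ.mulVec y - (Xᵀ * X).mulVec (w' k)))) / 2
          + σ * G (v (k+1))
        ≤ normSq (u - (v k + σ • (Xᵀ.mulVec y - (Xᵀ * X).mulVec (w' k)))) / 2
          + σ * G u)
    -- w_{k+1} = prox_{τ F}(w_k + τ XᵀX v_{k+1})
    (hw : ∀ k, ∀ u : Fin p → ℝ,
      ((normSq (w (k+1) - (w k + τ • (Xᵀ * X).mulVec (v (k+1)))) / 2 : ℝ) : EReal)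
          + (τ : EReal) * F (w (k+1))
        ≤ ((normSq (u - (w k + τ • (Xᵀ * X).mulVec (v (k+1)))) / 2 : ℝ) : EReal)
          + (τ : EReal) * F u)
    -- extrapolation step
    (hw' : ∀ k, w' (k+1) = (2 : ℝ) • w (k+1) - w k)
    (wstar vstar : Fin p → ℝ) :
    -- (i) primal-dual gap bound at any (w, v)
    (∀ k : ℕ, 1 ≤ k → ∀ ww vv : Fin p → ℝ,
      phi X y F G (avgIter w k) vv - phi X y F G ww (avgIter v k)
        ≤ (((1 / (k : ℝ)) *
            (normSq (vv - v 0) / (2 * σ) + normSq (ww - w 0) / (2 * τ)) : ℝ) : EReal)) ∧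
    -- (ii) in particular, the gap centered at the saddle point, with C = 1/(1 − τσL²)
    (∀ k : ℕ, 1 ≤ k →
      phi X y F G (avgIter w k) vstar - phi X y F G wstar (avgIter v k)
        ≤ ((((1 + 1 / (1 - τ * σ * L ^ 2)) / (k : ℝ)) *
            (normSq (wstar - w 0) / (2 * τ) + normSq (vstar - v 0) / (2 * σ)) : ℝ) : EReal)) ∧
    -- (iii) every limit point of the averaged iterates is a saddle point
    (∀ wh vh : Fin p → ℝ,
      MapClusterPt (wh, vh) Filter.atTop (fun k => (avgIter w k, avgIter v k)) →
      IsSaddle X y F G wh vh) := by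
  have hprox := fun k => hF.prox_toReal hτ (hw k)
  have hpd : IsPrimalDualSeq (Xᵀ * X) (Xᵀ *ᵥ y) (fun w => (F w).toReal) G {w | F w ≠ ⊤} τ σ
      w v w' := ⟨hv, fun k => (hprox k).1, fun k => (hprox k).2, hw'0, hw'⟩
  have hKb := dotp_mulVec_le hτ hσ (hL ▸ hstep) (sqrt_normSq_gram_mulVec_le X)
  have hgap := fun k (hk : 1 ≤ k) => phi_avgIter_sub_le hF hG hpd hKb hτ hσ hk
  refine ⟨hgap, fun k hk => (hgap k hk wstar vstar).trans ?_,
    fun wh vh => isSaddle_of_mapClusterPt hF hG fun ww vv ε hε => ?_⟩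
  · have hC : 0 ≤ 1 / (1 - τ * σ * L ^ 2) := one_div_nonneg.2 (sub_nonneg.2 hstep)
    have hS : 0 ≤ normSq (wstar - w 0) / (2 * τ) + normSq (vstar - v 0) / (2 * σ) :=
      add_nonneg (div_nonneg (normSq_nonneg _) (by positivity))
        (div_nonneg (normSq_nonneg _) (by positivity))
    rw [EReal.coe_le_coe_iff, add_comm (normSq (vstar - v 0) / (2 * σ))]
    exact mul_le_mul_of_nonneg_right (div_le_div_of_nonneg_right (by linarith) (by positivity)) hS
  · filter_upwards [eventually_ge_atTop 1,
      (tendsto_const_div_atTop_nhds_zero_nat _).eventually (gt_mem_nhds hε)] with k hk hsmall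
    rw [← one_div_mul_eq_div] at hsmall
    exact (hgap k hk ww vv).trans (EReal.coe_le_coe_iff.2 hsmall.le)

/-- ergodic `O(1/k)` convergence of the primal-dual gap, and every
limit point of the averaged iterates is a saddle point. -/
theorem pdsp_ergodic {n p : ℕ} (X : Matrix (Fin n) (Fin p) ℝ) (y : Fin n → ℝ)
    (F : (Fin p → ℝ) → EReal) (G : (Fin p → ℝ) → ℝ)
    (hF : ProperConvexLsc F) (hG : IsNorm G)
    (L : ℝ) (hL : L = opNorm (Xᵀ * fromCols (1 : Matrix (Fin n) (Fin n) ℝ) (-X)))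
    (τ σ : ℝ) (hτ : 0 < τ) (hσ : 0 < σ) (hstep : τ * σ * L ^ 2 ≤ 1)
    (w v w' : ℕ → Fin p → ℝ)
    (hw'0 : w' 0 = w 0)
    -- v_{k+1} = prox_{σ G}(v_k + σ(Xᵀy − XᵀX w'_k))
    (hv : ∀ k, ∀ u : Fin p → ℝ,
      normSq (v (k+1) - (v k + σ • (Xᵀ.mulVec y - (Xᵀ * X).mulVec (w' k)))) / 2
          + σ * G (v (k+1))
        ≤ normSq (u - (v k + σ • (Xᵀ.mulVec y - (Xᵀ * X).mulVec (w' k)))) / 2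
          + σ * G u)
    -- w_{k+1} = prox_{τ F}(w_k + τ XᵀX v_{k+1})
    (hw : ∀ k, ∀ u : Fin p → ℝ,
      ((normSq (w (k+1) - (w k + τ • (Xᵀ * X).mulVec (v (k+1)))) / 2 : ℝ) : EReal)
          + (τ : EReal) * F (w (k+1))
        ≤ ((normSq (u - (w k + τ • (Xᵀ * X).mulVec (v (k+1)))) / 2 : ℝ) : EReal)
          + (τ : EReal) * F u)
    -- extrapolation step
    (hw' : ∀ k, w' (k+1) = (2 : ℝ) • w (k+1) - w k)
    (wstar vstar : Fin p → ℝ)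
    (hsaddle : IsSaddle X y F G wstar vstar) :
    -- (i) primal-dual gap bound at any (w, v)
    (∀ k : ℕ, 1 ≤ k → ∀ ww vv : Fin p → ℝ,
      phi X y F G (avgIter w k) vv - phi X y F G ww (avgIter v k)
        ≤ (((1 / (k : ℝ)) *
            (normSq (vv - v 0) / (2 * σ) + normSq (ww - w 0) / (2 * τ)) : ℝ) : EReal)) ∧
    -- (ii) in particular, the gap centered at the saddle point, with C = 1/(1 − τσL²)
    (∀ k : ℕ, 1 ≤ k →
      phi X y F G (avgIter w k) vstar - phi X y F G wstar (avgIter v k)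
        ≤ ((((1 + 1 / (1 - τ * σ * L ^ 2)) / (k : ℝ)) *
            (normSq (wstar - w 0) / (2 * τ) + normSq (vstar - v 0) / (2 * σ)) : ℝ) : EReal)) ∧
    -- (iii) every limit point of the averaged iterates is a saddle point
    (∀ wh vh : Fin p → ℝ,
      MapClusterPt (wh, vh) Filter.atTop (fun k => (avgIter w k, avgIter v k)) →
      IsSaddle X y F G wh vh) :=
  pdsp_ergodic_general X y F G hF hG L hL τ σ hτ hσ hstep w v w' hw'0 hv hw hw' wstar vstar
end
end

section
/- Let λ_1 ≥ … ≥ λ_p ≥ 0 and let w ∈ ℝ^p with w_j > 0 for some index j. For ε ∈ (0, w_j], define w_ε by (w_ε)_j = w_j − ε and (w_ε)_i = w_i for i ≠ j. Then (i) J_λ(w_ε) ≤ J_λ(w); and (ii) if λ_i > 0 for all i, then J_λ(w_ε) < J_λ(w). -/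
noncomputable section

lemma sorted_mono {n : ℕ} (f g : Fin n → ℝ) (h : ∀ i, f i ≤ g i) (i : Fin n) :
    f (Tuple.sort f i) ≤ g (Tuple.sort g i) := by
  set σ := Tuple.sort f with hσ
  set τ := Tuple.sort g with hτ
  have hne : (((Finset.Ici i).image σ) ∩ ((Finset.Iic i).image τ)).Nonempty := by
    by_contra hemp
    rw [Finset.not_nonempty_iff_eq_empty, ← Finset.disjoint_iff_inter_eq_empty] at hemp
    have hcard := Finset.card_union_of_disjoint hemp
    have hle := Finset.card_le_univ (((Finset.Ici i).image σ) ∪ ((Finset.Iic i).image τ))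
    rw [hcard, Finset.card_image_of_injective _ σ.injective,
      Finset.card_image_of_injective _ τ.injective, Fin.card_Ici, Fin.card_Iic,
      Fintype.card_fin] at hle
    have := i.isLt
    omega
  obtain ⟨k, hk⟩ := hne
  rw [Finset.mem_inter, Finset.mem_image, Finset.mem_image] at hk
  obtain ⟨⟨m, hm, hmk⟩, ⟨m', hm', hm'k⟩⟩ := hk
  rw [Finset.mem_Ici] at hm
  rw [Finset.mem_Iic] at hm'
  calc f (σ i) ≤ f (σ m) := Tuple.monotone_sort f hm
    _ = f k := by rw [hmk]
    _ ≤ g k := h k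
    _ = g (τ m') := by rw [hm'k]
    _ ≤ g (τ i) := Tuple.monotone_sort g hm'

/-- `absSorted x k` is the `k`-th largest value (0-indexed) among `|x 0|, …, |x (p-1)|`,
i.e. the components of `|x|` sorted in nonincreasing order. -/
def absSorted {p : ℕ} (x : Fin p → ℝ) (k : Fin p) : ℝ :=
  |x (Tuple.sort (fun i => |x i|) k.rev)|

/-- The ordered ℓ1-norm `J_λ(w) = ∑ i, λ_i |w|_(i)`. -/
def Jlam {p : ℕ} (lam : Fin p → ℝ) (w : Fin p → ℝ) : ℝ :=
  ∑ i, lam i * absSorted w i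

lemma absSorted_mono {p : ℕ} (x y : Fin p → ℝ) (h : ∀ i, |x i| ≤ |y i|) (k : Fin p) :
    absSorted x k ≤ absSorted y k :=
  sorted_mono (fun i => |x i|) (fun i => |y i|) h k.rev

lemma sum_absSorted {p : ℕ} (x : Fin p → ℝ) : ∑ k, absSorted x k = ∑ i, |x i| := by
  unfold absSorted
  exact Equiv.sum_comp ((Fin.revPerm).trans (Tuple.sort fun i => |x i|)) (fun i => |x i|)

/-- Pulling to zero: decreasing a strictly positive coordinate of `w`
does not increase `J_λ(w)`, and strictly decreases it when all `λ_i > 0`. -/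
theorem Jlam_pull_to_zero {p : ℕ} (lam : Fin p → ℝ)
    (hlam : Antitone lam) (hnn : ∀ i, 0 ≤ lam i)
    (w : Fin p → ℝ) (j : Fin p) (hwj : 0 < w j)
    (ε : ℝ) (hε : 0 < ε) (hεle : ε ≤ w j) :
    Jlam lam (Function.update w j (w j - ε)) ≤ Jlam lam w ∧
    ((∀ i, 0 < lam i) → Jlam lam (Function.update w j (w j - ε)) < Jlam lam w) := by
  set x := Function.update w j (w j - ε) with hx
  have habs : ∀ i, |x i| ≤ |w i| := by
    intro i
    by_cases hij : i = j
    · subst hij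
      rw [hx, Function.update_self, abs_of_nonneg (by linarith), abs_of_pos hwj]
      linarith
    · rw [hx, Function.update_of_ne hij]
  have hsorted : ∀ k, absSorted x k ≤ absSorted w k := absSorted_mono x w habs
  constructor
  · exact Finset.sum_le_sum fun k _ => mul_le_mul_of_nonneg_left (hsorted k) (hnn k)
  · intro hpos
    have hsum : ∑ k, absSorted x k < ∑ k, absSorted w k := by
      rw [sum_absSorted, sum_absSorted]
      refine Finset.sum_lt_sum (fun i _ => habs i) ⟨j, Finset.mem_univ j, ?_⟩
      rw [hx, Function.update_self, abs_of_nonneg (by linarith), abs_of_pos hwj]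
      linarith
    have hex : ∃ k, absSorted x k < absSorted w k := by
      by_contra hc
      push_neg at hc
      exact absurd (Finset.sum_le_sum fun k _ => hc k) (not_le.2 hsum)
    obtain ⟨k, hk⟩ := hex
    exact Finset.sum_lt_sum
      (fun i _ => mul_le_mul_of_nonneg_left (hsorted i) (hnn i))
      ⟨k, Finset.mem_univ k, mul_lt_mul_of_pos_left hk (hpos k)⟩
end
end

section
/- Let λ_1 ≥ … ≥ λ_p ≥ 0 and let w ∈ ℝ^p with w_i ≥ 0 for all i and w_j > w_l for some indices j, l. For 0 < ε ≤ (w_j − w_l)/2, define w_ε by (w_ε)_l = w_l + ε, (w_ε)_j = w_j − ε, and (w_ε)_i = w_i otherwise. Then (i) J_λ(w_ε) ≤ J_λ(w); and (ii) if λ_1 > λ_2 > … > λ_p, then J_λ(w_ε) < J_λ(w). -/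
noncomputable section

open Finset

lemma antitone_absSorted {p : ℕ} (x : Fin p → ℝ) : Antitone (absSorted x) := by
  have hm : Monotone ((fun i => |x i|) ∘ Tuple.sort (fun i => |x i|)) :=
    Tuple.monotone_sort _
  intro i j hij
  exact hm (Fin.rev_le_rev.mpr hij)

/-- Rearrangement bound: any permuted pairing of `lam` with `|x|` is at most `Jlam`. -/
lemma sum_perm_le_Jlam {p : ℕ} (lam : Fin p → ℝ) (hlam : Antitone lam)
    (x : Fin p → ℝ) (π : Equiv.Perm (Fin p)) :
    ∑ i, lam i * |x (π i)| ≤ Jlam lam x := by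
  set ρ : Equiv.Perm (Fin p) := Fin.revPerm.trans (Tuple.sort (fun i => |x i|)) with hρdef
  have hρ : ∀ i, absSorted x i = |x (ρ i)| := fun i => rfl
  have hmono : Monovary lam (absSorted x) := by
    intro i j hij
    rcases le_or_gt j i with h | h
    · exact hlam h
    · exact absurd (antitone_absSorted x h.le) (not_le.mpr hij)
  set τ : Equiv.Perm (Fin p) := π.trans ρ.symm with hτdef
  have hx : ∀ i, |x (π i)| = absSorted x (τ i) := by
    intro i
    rw [hρ]
    simp [hτdef]
  calc ∑ i, lam i * |x (π i)| = ∑ i, lam i • absSorted x (τ i) := by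
        simp only [smul_eq_mul, hx]
    _ ≤ ∑ i, lam i • absSorted x i := hmono.sum_smul_comp_perm_le_sum_smul
    _ = Jlam lam x := by simp [Jlam, smul_eq_mul]

/-- Pulling to the mean: moving two coordinates of a nonnegative vector
towards each other does not increase `J_λ`, and strictly decreases it when
`λ_1 > … > λ_p`. -/
theorem Jlam_pull_to_mean {p : ℕ} (lam : Fin p → ℝ)
    (hlam : Antitone lam) (hnn : ∀ i, 0 ≤ lam i)
    (w : Fin p → ℝ) (hw : ∀ i, 0 ≤ w i)
    (j l : Fin p) (hjl : w l < w j)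
    (ε : ℝ) (hε : 0 < ε) (hεle : ε ≤ (w j - w l) / 2) :
    Jlam lam (Function.update (Function.update w j (w j - ε)) l (w l + ε)) ≤ Jlam lam w ∧
    (StrictAnti lam →
      Jlam lam (Function.update (Function.update w j (w j - ε)) l (w l + ε)) < Jlam lam w) := by
  have hjl' : j ≠ l := by rintro rfl; exact lt_irrefl _ hjl
  set v := Function.update (Function.update w j (w j - ε)) l (w l + ε) with hv
  have hvl : v l = w l + ε := by simp [hv]
  have hvj : v j = w j - ε := by
    simp [hv, Function.update_of_ne hjl']
  have hvi : ∀ i, i ≠ j → i ≠ l → v i = w i := by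
    intro i hij hil
    simp [hv, Function.update_of_ne hil, Function.update_of_ne hij]
  have hb : 0 ≤ w l := hw l
  have hvj0 : 0 ≤ w j - ε := by linarith
  have hvl0 : 0 ≤ w l + ε := by linarith
  have hwj0 : 0 ≤ w j := hw j
  set π : Equiv.Perm (Fin p) := Fin.revPerm.trans (Tuple.sort (fun i => |v i|)) with hπdef
  have hJv : Jlam lam v = ∑ i, lam i * |v (π i)| := rfl
  set s := π.symm j with hs
  set t := π.symm l with ht
  have hst : s ≠ t := fun h => hjl' (by
    have := congrArg π h
    simpa [hs, ht] using this)
  have hπs : π s = j := π.apply_symm_apply j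
  have hπt : π t = l := π.apply_symm_apply l
  -- splitting a sum over `univ` into the `s`, `t` terms and the rest
  have split : ∀ F : Fin p → ℝ,
      ∑ i, F i = F s + F t + ∑ i ∈ ({s, t} : Finset (Fin p))ᶜ, F i := by
    intro F
    rw [← Finset.sum_add_sum_compl ({s, t} : Finset (Fin p)) F,
      Finset.sum_pair hst]
  have hcompl : ∀ i : Fin p, i ∈ ({s, t} : Finset (Fin p))ᶜ → i ≠ s ∧ i ≠ t := by
    intro i hi
    simp only [Finset.mem_compl, Finset.mem_insert, Finset.mem_singleton, not_or] at hi
    exact hi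
  have hπne : ∀ i : Fin p, i ≠ s → i ≠ t → (π i ≠ j ∧ π i ≠ l) := by
    intro i his hit
    constructor
    · intro h; exact his (by rw [hs, ← h, Equiv.symm_apply_apply])
    · intro h; exact hit (by rw [ht, ← h, Equiv.symm_apply_apply])
  have hB : ∑ i, lam i * |w (π i)| ≤ Jlam lam w := sum_perm_le_Jlam lam hlam w π
  -- Case analysis data: case where lam t ≤ lam s
  have hA : Jlam lam v + ε * lam s = (∑ i, lam i * |w (π i)|) + ε * lam t := by
    rw [hJv, split (fun i => lam i * |v (π i)|), split (fun i => lam i * |w (π i)|)]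
    have hsum : ∑ i ∈ ({s, t} : Finset (Fin p))ᶜ, lam i * |v (π i)|
        = ∑ i ∈ ({s, t} : Finset (Fin p))ᶜ, lam i * |w (π i)| := by
      refine Finset.sum_congr rfl fun i hi => ?_
      obtain ⟨his, hit⟩ := hcompl i hi
      obtain ⟨h1, h2⟩ := hπne i his hit
      rw [hvi _ h1 h2]
    rw [hsum, hπs, hπt, hvj, hvl, abs_of_nonneg hvj0, abs_of_nonneg hvl0,
      abs_of_nonneg hwj0, abs_of_nonneg hb]
    ring
  -- Case where lam s < lam t: swap positions
  set π' : Equiv.Perm (Fin p) := (Equiv.swap s t).trans π with hπ'def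
  have hπ's : π' s = l := by simp [hπ'def, Equiv.swap_apply_left, hπt]
  have hπ't : π' t = j := by simp [hπ'def, Equiv.swap_apply_right, hπs]
  have hπ'i : ∀ i, i ≠ s → i ≠ t → π' i = π i := by
    intro i his hit
    simp [hπ'def, Equiv.swap_apply_of_ne_of_ne his hit]
  have hB' : ∑ i, lam i * |w (π' i)| ≤ Jlam lam w := sum_perm_le_Jlam lam hlam w π'
  have hA' : Jlam lam v + (lam t - lam s) * (w j - w l - ε)
      = ∑ i, lam i * |w (π' i)| := by
    rw [hJv, split (fun i => lam i * |v (π i)|), split (fun i => lam i * |w (π' i)|)]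
    have hsum : ∑ i ∈ ({s, t} : Finset (Fin p))ᶜ, lam i * |v (π i)|
        = ∑ i ∈ ({s, t} : Finset (Fin p))ᶜ, lam i * |w (π' i)| := by
      refine Finset.sum_congr rfl fun i hi => ?_
      obtain ⟨his, hit⟩ := hcompl i hi
      obtain ⟨h1, h2⟩ := hπne i his hit
      rw [hπ'i i his hit, hvi _ h1 h2]
    rw [hsum, hπs, hπt, hπ's, hπ't, hvj, hvl, abs_of_nonneg hvj0, abs_of_nonneg hvl0,
      abs_of_nonneg hwj0, abs_of_nonneg hb]
    ring
  have hgap : 0 < w j - w l - ε := by linarith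
  constructor
  · rcases le_or_gt (lam t) (lam s) with hc | hc
    · nlinarith
    · nlinarith
  · intro hstrict
    rcases hst.lt_or_gt with hlt | hlt
    · -- s < t, so lam t < lam s
      have hc : lam t < lam s := hstrict hlt
      nlinarith
    · -- t < s, so lam s < lam t
      have hc : lam s < lam t := hstrict hlt
      nlinarith
end
end

section
/- Let λ_1 ≥ … ≥ λ_p ≥ 0 with λ_1 > 0, and let J_λ^D be the dual norm of the ordered ℓ1-norm J_λ. Then for every x ∈ ℝ^p, J_λ^D(x) = max_{1 ≤ k ≤ p} ( Σ_{i=1}^k |x|_(i) ) / ( Σ_{i=1}^k λ_i ). -/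
noncomputable section

/-- The dual norm of the ordered ℓ1-norm: `J_λ^D(x) = max {⟨x, v⟩ : J_λ(v) ≤ 1}`. -/
def JlamD {p : ℕ} (lam x : Fin p → ℝ) : ℝ :=
  sSup {c | ∃ v : Fin p → ℝ, Jlam lam v ≤ 1 ∧ c = ∑ i, x i * v i}

namespace OwlAux

variable {p : ℕ}

/-- The permutation `e` with `absSorted x k = |x (e k)|`. -/
def sortPerm (x : Fin p → ℝ) : Equiv.Perm (Fin p) :=
  Fin.revPerm.trans (Tuple.sort fun i => |x i|)

lemma absSorted_eq (x : Fin p → ℝ) (k : Fin p) : absSorted x k = |x (sortPerm x k)| := rfl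

lemma abs_eq_absSorted (x : Fin p → ℝ) (j : Fin p) :
    |x j| = absSorted x ((sortPerm x).symm j) := by
  rw [absSorted_eq, Equiv.apply_symm_apply]

lemma absSorted_nonneg (x : Fin p → ℝ) (k : Fin p) : 0 ≤ absSorted x k := abs_nonneg _

lemma absSorted_antitone (x : Fin p → ℝ) : Antitone (absSorted x) := by
  intro i j hij
  exact Tuple.monotone_sort (fun i => |x i|) (Fin.rev_le_rev.mpr hij)

lemma absSorted_of_monotone (v : Fin p → ℝ) (e : Equiv.Perm (Fin p))
    (h : Monotone fun j => |v (e j)|) (k : Fin p) : absSorted v k = |v (e k.rev)| := by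
  have h2 : (fun i => |v i|) ∘ e = (fun i => |v i|) ∘ Tuple.sort (fun i => |v i|) :=
    Tuple.comp_sort_eq_comp_iff_monotone.mpr h
  exact (congrFun h2 k.rev).symm

/-- Abel-type comparison over `range n`. -/
lemma abel_le (n : ℕ) (a c b : ℕ → ℝ)
    (hb : ∀ i j, i ≤ j → j < n → b j ≤ b i)
    (hb0 : ∀ i, i < n → 0 ≤ b i)
    (hac : ∀ k, k < n → ∑ i ∈ Finset.range (k + 1), a i ≤ ∑ i ∈ Finset.range (k + 1), c i) :
    ∑ i ∈ Finset.range n, a i * b i ≤ ∑ i ∈ Finset.range n, c i * b i := by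
  rcases n with _ | m
  · simp
  have key : ∀ f : ℕ → ℝ, ∑ i ∈ Finset.range (m + 1), f i * b i
      = b m * (∑ i ∈ Finset.range (m + 1), f i)
        - ∑ i ∈ Finset.range m, (b (i + 1) - b i) * (∑ j ∈ Finset.range (i + 1), f j) := by
    intro f
    have h := Finset.sum_range_by_parts b f (m + 1)
    simp only [smul_eq_mul, Nat.add_sub_cancel] at h
    calc ∑ i ∈ Finset.range (m + 1), f i * b i
        = ∑ i ∈ Finset.range (m + 1), b i * f i := by simp [mul_comm]
      _ = _ := h
  rw [key a, key c]
  have h1 : b m * (∑ i ∈ Finset.range (m + 1), a i)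
      ≤ b m * (∑ i ∈ Finset.range (m + 1), c i) := by
    apply mul_le_mul_of_nonneg_left _ (hb0 _ (Nat.lt_succ_self _))
    exact hac m (Nat.lt_succ_self _)
  have h2 : ∑ i ∈ Finset.range m, (b (i + 1) - b i) * (∑ j ∈ Finset.range (i + 1), c j)
      ≤ ∑ i ∈ Finset.range m, (b (i + 1) - b i) * (∑ j ∈ Finset.range (i + 1), a j) := by
    apply Finset.sum_le_sum
    intro i hi
    have hi' := Finset.mem_range.mp hi
    have hbi : b (i + 1) - b i ≤ 0 := by
      have := hb i (i + 1) (Nat.le_succ i) (by omega)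
      linarith
    exact mul_le_mul_of_nonpos_left (hac i (by omega)) hbi
  linarith

/-- Extension by zero of a tuple. -/
def extz (g : Fin p → ℝ) (j : ℕ) : ℝ := if h : j < p then g ⟨j, h⟩ else 0

lemma extz_smul (r : ℝ) (g : Fin p → ℝ) (j : ℕ) :
    extz (fun i => r * g i) j = r * extz g j := by
  unfold extz; split <;> simp

lemma sum_univ_mul_eq (g h : Fin p → ℝ) :
    ∑ i, g i * h i = ∑ j ∈ Finset.range p, extz g j * extz h j := by
  rw [← Fin.sum_univ_eq_sum_range (fun j => extz g j * extz h j) p]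
  apply Finset.sum_congr rfl
  intro i _
  simp [extz, i.is_lt]

/-- Convert a `Fin` `Iic` sum to a `range` sum of the extension-by-zero. -/
lemma sum_Iic_eq_range (f : Fin p → ℝ) (k : Fin p) :
    ∑ i ∈ Finset.Iic k, f i = ∑ j ∈ Finset.range (k.val + 1), extz f j := by
  rw [show Finset.range (k.val + 1) = (Finset.Iic k).map Fin.valEmbedding from by
        rw [Fin.map_valEmbedding_Iic]; ext m; simp [Nat.lt_succ_iff],
      Finset.sum_map]
  apply Finset.sum_congr rfl
  intro i _
  simp [extz, Fin.valEmbedding, i.is_lt]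

end OwlAux


open OwlAux in
/-- explicit formula for the dual of the ordered ℓ1-norm:
`J_λ^D(x) = max_k (∑_{i=1}^k |x|_(i)) / (∑_{i=1}^k λ_i)`. -/
theorem JlamD_eq_max_ratio {p : ℕ} (hp : 0 < p) (lam : Fin p → ℝ)
    (hlam : Antitone lam) (hnn : ∀ i, 0 ≤ lam i) (hlam1 : 0 < lam ⟨0, hp⟩)
    (x : Fin p → ℝ) :
    JlamD lam x =
      Finset.univ.sup' ⟨⟨0, hp⟩, Finset.mem_univ _⟩
        (fun k : Fin p =>
          (∑ i ∈ Finset.Iic k, absSorted x i) / (∑ i ∈ Finset.Iic k, lam i)) := by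
  classical
  set f : Fin p → ℝ := fun k =>
    (∑ i ∈ Finset.Iic k, absSorted x i) / (∑ i ∈ Finset.Iic k, lam i) with hf
  set M : ℝ := Finset.univ.sup' ⟨⟨0, hp⟩, Finset.mem_univ _⟩ f with hMdef
  -- positivity of the partial sums of `lam`
  have hL : ∀ k : Fin p, 0 < ∑ i ∈ Finset.Iic k, lam i := by
    intro k
    have h0k : (⟨0, hp⟩ : Fin p) ∈ Finset.Iic k := by
      simp [Finset.mem_Iic, Fin.le_def]
    calc (0:ℝ) < lam ⟨0, hp⟩ := hlam1
      _ ≤ _ := Finset.single_le_sum (fun i _ => hnn i) h0k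
  have hMk : ∀ k : Fin p,
      ∑ i ∈ Finset.Iic k, absSorted x i ≤ M * ∑ i ∈ Finset.Iic k, lam i := by
    intro k
    have h := Finset.le_sup' f (Finset.mem_univ k)
    exact (div_le_iff₀ (hL k)).mp h
  have hM0 : 0 ≤ M := by
    have h1 : 0 ≤ f ⟨0, hp⟩ :=
      div_nonneg (Finset.sum_nonneg fun i _ => absSorted_nonneg x i) (hL _).le
    exact h1.trans (Finset.le_sup' f (Finset.mem_univ _))
  -- upper bound
  have hub : ∀ c ∈ {c | ∃ v : Fin p → ℝ, Jlam lam v ≤ 1 ∧ c = ∑ i, x i * v i}, c ≤ M := by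
    rintro c ⟨v, hv, rfl⟩
    set a := absSorted x with ha
    set b := absSorted v with hb
    set π : Equiv.Perm (Fin p) := (sortPerm x).trans (sortPerm v).symm with hπ
    have step1 : ∑ i, x i * v i ≤ ∑ i, |x i| * |v i| :=
      Finset.sum_le_sum fun i _ => by rw [← abs_mul]; exact le_abs_self _
    have step2 : ∑ i, |x i| * |v i| = ∑ i, a i * b (π i) := by
      calc ∑ i, |x i| * |v i|
          = ∑ i, a ((sortPerm x).symm i) * b ((sortPerm v).symm i) := by
            refine Finset.sum_congr rfl fun i _ => ?_
            rw [ha, hb, ← abs_eq_absSorted, ← abs_eq_absSorted]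
        _ = ∑ i, a ((sortPerm x).symm (sortPerm x i)) * b ((sortPerm v).symm (sortPerm x i)) :=
            (Equiv.sum_comp (sortPerm x)
              (fun j => a ((sortPerm x).symm j) * b ((sortPerm v).symm j))).symm
        _ = ∑ i, a i * b (π i) := by
            refine Finset.sum_congr rfl fun i _ => ?_
            rw [Equiv.symm_apply_apply, hπ, Equiv.trans_apply]
    have hmono : Monovary a b := by
      intro i j hbij
      rcases le_or_gt j i with h | h
      · exact absSorted_antitone x h
      · exact absurd (absSorted_antitone v h.le) (not_le.mpr hbij)
    have step3 : ∑ i, a i * b (π i) ≤ ∑ i, a i * b i :=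
      hmono.sum_mul_comp_perm_le_sum_mul (σ := π)
    have step4 : ∑ i, a i * b i ≤ ∑ i, (M * lam i) * b i := by
      rw [sum_univ_mul_eq a b, sum_univ_mul_eq (fun i => M * lam i) b]
      have habel := abel_le p (extz a) (extz (fun i => M * lam i)) (extz b)
        (fun i j hij hj => by
          simp only [extz, dif_pos hj, dif_pos (lt_of_le_of_lt hij hj)]
          exact absSorted_antitone v (by exact hij))
        (fun i hi => by simp only [extz, dif_pos hi]; exact absSorted_nonneg v _)
        (fun k hk => by
          have hk' : (⟨k, hk⟩ : Fin p) = ⟨k, hk⟩ := rfl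
          rw [← sum_Iic_eq_range a ⟨k, hk⟩, ← sum_Iic_eq_range (fun i => M * lam i) ⟨k, hk⟩]
          rw [← Finset.mul_sum]
          exact hMk ⟨k, hk⟩)
      exact habel
    have step5 : ∑ i, (M * lam i) * b i ≤ M := by
      have : ∑ i, (M * lam i) * b i = M * Jlam lam v := by
        rw [Jlam, Finset.mul_sum]
        exact Finset.sum_congr rfl fun i _ => by ring
      rw [this]
      calc M * Jlam lam v ≤ M * 1 := mul_le_mul_of_nonneg_left hv hM0
        _ = M := mul_one M
    exact le_trans step1 (step2 ▸ le_trans step3 (le_trans step4 step5))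
  -- the supremum is attained
  obtain ⟨k, -, hk⟩ := Finset.exists_mem_eq_sup' (⟨⟨0, hp⟩, Finset.mem_univ _⟩ :
    (Finset.univ : Finset (Fin p)).Nonempty) f
  set L : ℝ := ∑ i ∈ Finset.Iic k, lam i with hLdef
  have hLk : 0 < L := hL k
  set σ : Equiv.Perm (Fin p) := Tuple.sort (fun i => |x i|) with hσ
  set sg : Fin p → ℝ := fun j => if x j < 0 then -1 else 1 with hsg
  have hsg1 : ∀ j, |sg j| = 1 := by
    intro j; rw [hsg]; dsimp only; split <;> simp
  have hxsg : ∀ j, x j * sg j = |x j| := by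
    intro j; rw [hsg]; dsimp only; split
    · rw [abs_of_neg (by assumption)]; ring
    · rw [abs_of_nonneg (not_lt.mp (by assumption))]; ring
  set v : Fin p → ℝ := fun j => if k.rev ≤ σ.symm j then sg j / L else 0 with hv
  have hvσ : ∀ j, v (σ j) = if k.rev ≤ j then sg (σ j) / L else 0 := by
    intro j; rw [hv]; simp only [Equiv.symm_apply_apply]
  have habsv : ∀ j, |v (σ j)| = if k.rev ≤ j then 1 / L else 0 := by
    intro j; rw [hvσ]
    split
    · rw [abs_div, hsg1, abs_of_pos hLk]
    · exact abs_zero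
  have hmonov : Monotone fun j => |v (σ j)| := by
    intro i j hij
    dsimp only
    rw [habsv, habsv]
    split_ifs with h1 h2
    · exact le_refl _
    · exact absurd (h1.trans hij) h2
    · positivity
    · exact le_refl _
  have habsSv : ∀ i, absSorted v i = if i ≤ k then 1 / L else 0 := by
    intro i
    rw [absSorted_of_monotone v σ hmonov i, habsv]
    simp only [Fin.rev_le_rev]
  have hJv : Jlam lam v = 1 := by
    rw [Jlam]
    have : ∀ i, lam i * absSorted v i = if i ≤ k then lam i * (1 / L) else 0 := by
      intro i; rw [habsSv]; split <;> simp
    rw [Finset.sum_congr rfl fun i _ => this i]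
    rw [← Finset.sum_filter]
    have hfil : (Finset.univ.filter fun i => i ≤ k) = Finset.Iic k := by
      ext i; simp
    rw [hfil, ← Finset.sum_mul, ← hLdef]
    field_simp
  have hsum : ∑ i, x i * v i = M := by
    have e1 : ∑ j, x j * v j = ∑ j, x (σ j) * v (σ j) :=
      (Equiv.sum_comp σ (fun j => x j * v j)).symm
    have e2 : ∀ j, x (σ j) * v (σ j) = if k.rev ≤ j then absSorted x j.rev / L else 0 := by
      intro j
      rw [hvσ]
      split
      · rw [show absSorted x j.rev = |x (σ j)| from by
          rw [absSorted_eq, sortPerm, Equiv.trans_apply, Fin.revPerm_apply, Fin.rev_rev, hσ]]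
        rw [← hxsg (σ j)]; ring
      · exact mul_zero _
    have e3 : ∑ j, (if k.rev ≤ j then absSorted x j.rev / L else 0)
        = ∑ i, (if i ≤ k then absSorted x i / L else 0) := by
      rw [← Equiv.sum_comp (Fin.revPerm)
        (fun j => if k.rev ≤ j then absSorted x j.rev / L else 0)]
      refine Finset.sum_congr rfl fun i _ => ?_
      simp only [Fin.revPerm_apply, Fin.rev_rev, Fin.rev_le_rev]
    have e4 : ∑ i, (if i ≤ k then absSorted x i / L else 0)
        = (∑ i ∈ Finset.Iic k, absSorted x i) / L := by
      rw [← Finset.sum_filter]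
      have hfil : (Finset.univ.filter fun i => i ≤ k) = Finset.Iic k := by
        ext i; simp
      rw [hfil, ← Finset.sum_div]
    calc ∑ i, x i * v i = ∑ j, x (σ j) * v (σ j) := e1
      _ = ∑ j, (if k.rev ≤ j then absSorted x j.rev / L else 0) :=
          Finset.sum_congr rfl fun j _ => e2 j
      _ = (∑ i ∈ Finset.Iic k, absSorted x i) / L := by rw [e3, e4]
      _ = f k := rfl
      _ = M := hk.symm
  have hmem : M ∈ {c | ∃ v : Fin p → ℝ, Jlam lam v ≤ 1 ∧ c = ∑ i, x i * v i} :=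
    ⟨v, hJv.le, hsum.symm⟩
  rw [JlamD]
  exact le_antisymm (csSup_le ⟨M, hmem⟩ hub) (le_csSup ⟨M, hub⟩ hmem)
end
end

section
/- Let λ_1 ≥ … ≥ λ_p ≥ 0 with λ_1 > 0, let x ∈ ℝ^p, and let J_λ^D be the dual norm of the ordered ℓ1-norm J_λ. (i) If x_j > x_l ≥ 0 for indices j, l, then for every ε ∈ (0, (x_j − x_l)/2], the vector x_ε defined by (x_ε)_l = x_l + ε, (x_ε)_j = x_j − ε, (x_ε)_i = x_i otherwise, satisfies J_λ^D(x_ε) ≤ J_λ^D(x). (ii) If x_j > 0, then for every ε ∈ (0, x_j], the vector x̃_ε defined by (x̃_ε)_j = x_j − ε and (x̃_ε)_i = x_i otherwise satisfies J_λ^D(x̃_ε) ≤ J_λ^D(x). -/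
/-!
`J_λ` is invariant under permuting the coordinates of its argument and under changing their
signs. Hence, for every feasible `v` (i.e. `J_λ(v) ≤ 1`), either `v` itself or `v` with its
`j`-th and `l`-th coordinates swapped (for (i)), resp. `v` with `v_j` replaced by `|v_j|`
(for (ii)), is again feasible and pairs with `x` at least as well as `v` pairs with the pulled
vector. Taking suprema gives the claim; the supremum is finite because
`λ_1 |v_i| ≤ J_λ(v)`.
-/

noncomputable section

open Matrix Function

section
variable {p : ℕ}

theorem absSorted_eq_of_abs_eq_comp {v w : Fin p → ℝ} (σ : Equiv.Perm (Fin p))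
    (h : ∀ i, |w i| = |v (σ i)|) : absSorted w = absSorted v := by
  funext k
  have hf : (fun i => |w i|) = (fun i => |v i|) ∘ σ := funext h
  calc absSorted w k = |v (σ (Tuple.sort ((fun i => |v i|) ∘ σ) k.rev))| := by
        rw [absSorted, h, hf]
    _ = absSorted v k :=
        congrFun (Tuple.comp_perm_comp_sort_eq_comp_sort (f := fun i => |v i|) (σ := σ)) k.rev

theorem Jlam_comp_perm (lam v : Fin p → ℝ) (σ : Equiv.Perm (Fin p)) :
    Jlam lam (v ∘ σ) = Jlam lam v := by
  rw [Jlam, Jlam, absSorted_eq_of_abs_eq_comp (v := v) (w := v ∘ σ) σ fun _ => rfl]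

theorem Jlam_update_abs (lam v : Fin p → ℝ) (j : Fin p) :
    Jlam lam (update v j |v j|) = Jlam lam v := by
  have h (i : Fin p) : |update v j |v j| i| = |v (Equiv.refl _ i)| := by
    rcases eq_or_ne i j with rfl | hij
    · simp
    · simp [update_of_ne hij]
  rw [Jlam, Jlam, absSorted_eq_of_abs_eq_comp _ h]

theorem abs_le_absSorted_zero (hp : 0 < p) (v : Fin p → ℝ) (i : Fin p) :
    |v i| ≤ absSorted v ⟨0, hp⟩ := by
  set f : Fin p → ℝ := fun i => |v i|
  have hle : (Tuple.sort f).symm i ≤ Fin.rev ⟨0, hp⟩ := by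
    simp only [Fin.le_def, Fin.val_rev]
    have := ((Tuple.sort f).symm i).isLt
    omega
  calc |v i| = (f ∘ Tuple.sort f) ((Tuple.sort f).symm i) := by simp [f]
    _ ≤ (f ∘ Tuple.sort f) (Fin.rev ⟨0, hp⟩) := Tuple.monotone_sort f hle
    _ = absSorted v ⟨0, hp⟩ := rfl

theorem lam_zero_mul_abs_le_Jlam (hp : 0 < p) {lam : Fin p → ℝ} (hnn : ∀ i, 0 ≤ lam i)
    (v : Fin p → ℝ) (i : Fin p) : lam ⟨0, hp⟩ * |v i| ≤ Jlam lam v :=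
  calc lam ⟨0, hp⟩ * |v i| ≤ lam ⟨0, hp⟩ * absSorted v ⟨0, hp⟩ :=
        mul_le_mul_of_nonneg_left (abs_le_absSorted_zero hp v i) (hnn _)
    _ ≤ Jlam lam v :=
        Finset.single_le_sum (f := fun i => lam i * absSorted v i)
          (fun i _ => mul_nonneg (hnn i) (abs_nonneg _)) (Finset.mem_univ _)

theorem bddAbove_dual_set (hp : 0 < p) {lam : Fin p → ℝ} (hnn : ∀ i, 0 ≤ lam i)
    (hlam1 : 0 < lam ⟨0, hp⟩) (x : Fin p → ℝ) :
    BddAbove {c | ∃ v : Fin p → ℝ, Jlam lam v ≤ 1 ∧ c = ∑ i, x i * v i} := by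
  refine ⟨∑ i, |x i| * (1 / lam ⟨0, hp⟩), ?_⟩
  rintro c ⟨v, hv, rfl⟩
  have hv_le (i : Fin p) : |v i| ≤ 1 / lam ⟨0, hp⟩ := by
    rw [le_div_iff₀' hlam1]
    exact (lam_zero_mul_abs_le_Jlam hp hnn v i).trans hv
  calc ∑ i, x i * v i ≤ ∑ i, |x i| * |v i| :=
        Finset.sum_le_sum fun i _ => (le_abs_self _).trans (abs_mul _ _).le
    _ ≤ ∑ i, |x i| * (1 / lam ⟨0, hp⟩) :=
        Finset.sum_le_sum fun i _ => mul_le_mul_of_nonneg_left (hv_le i) (abs_nonneg _)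

theorem JlamD_le_JlamD_of_forall_exists (hp : 0 < p) {lam : Fin p → ℝ}
    (hnn : ∀ i, 0 ≤ lam i) (hlam1 : 0 < lam ⟨0, hp⟩) {x y : Fin p → ℝ}
    (H : ∀ v, Jlam lam v ≤ 1 → ∃ w, Jlam lam w ≤ 1 ∧ y ⬝ᵥ v ≤ x ⬝ᵥ w) :
    JlamD lam y ≤ JlamD lam x := by
  have hne : Jlam lam 0 ≤ 1 := by simp [Jlam, absSorted]
  refine csSup_le ⟨0, 0, hne, by simp⟩ ?_
  rintro c ⟨v, hv, rfl⟩
  obtain ⟨w, hw, hle⟩ := H v hv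
  exact hle.trans (le_csSup (bddAbove_dual_set hp hnn hlam1 x) ⟨w, hw, rfl⟩)

end

section
variable {ι : Type*} [Fintype ι] [DecidableEq ι]

theorem update_dotProduct (x v : ι → ℝ) (j : ι) (a : ℝ) :
    update x j a ⬝ᵥ v = x ⬝ᵥ v + (a - x j) * v j := by
  have : update x j a = x + Pi.single j (a - x j) := by
    ext i
    rcases eq_or_ne i j with rfl | hij
    · simp
    · simp [hij]
  rw [this, add_dotProduct, single_dotProduct]

theorem dotProduct_update (x v : ι → ℝ) (j : ι) (b : ℝ) :
    x ⬝ᵥ update v j b = x ⬝ᵥ v + x j * (b - v j) := by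
  rw [dotProduct_comm, update_dotProduct, dotProduct_comm, mul_comm]

theorem dotProduct_comp_swap (x v : ι → ℝ) {j l : ι} (hjl : j ≠ l) :
    x ⬝ᵥ (v ∘ Equiv.swap j l) = x ⬝ᵥ v + (x j - x l) * (v l - v j) := by
  rw [Equiv.comp_swap_eq_update, dotProduct_update, dotProduct_update, update_of_ne hjl]
  ring

end

section
variable {p : ℕ} (hp : 0 < p) {lam : Fin p → ℝ} (hnn : ∀ i, 0 ≤ lam i) (hlam1 : 0 < lam ⟨0, hp⟩)
include hp hnn hlam1

theorem JlamD_update_update_le {x : Fin p → ℝ} {j l : Fin p} (hlj : x l < x j) {ε : ℝ}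
    (hε : 0 ≤ ε) (hεle : ε ≤ x j - x l) :
    JlamD lam (update (update x j (x j - ε)) l (x l + ε)) ≤ JlamD lam x := by
  have hjl : j ≠ l := by rintro rfl; exact hlj.false
  refine JlamD_le_JlamD_of_forall_exists hp hnn hlam1 fun v hv => ?_
  have hpulled : update (update x j (x j - ε)) l (x l + ε) ⬝ᵥ v
      = x ⬝ᵥ v - ε * (v j - v l) := by
    rw [update_dotProduct, update_dotProduct, update_of_ne hjl.symm]
    ring
  rcases le_total (v l) (v j) with hv_le | hv_le
  · exact ⟨v, hv, hpulled ▸ sub_le_self _ (mul_nonneg hε (sub_nonneg.2 hv_le))⟩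
  · refine ⟨v ∘ Equiv.swap j l, (Jlam_comp_perm lam v _).trans_le hv, ?_⟩
    rw [hpulled, dotProduct_comp_swap x v hjl]
    have := mul_le_mul_of_nonneg_right hεle (sub_nonneg.2 hv_le)
    linarith

theorem JlamD_update_sub_le {x : Fin p → ℝ} {j : Fin p} {ε : ℝ} (hε : 0 ≤ ε) (hεle : ε ≤ x j) :
    JlamD lam (update x j (x j - ε)) ≤ JlamD lam x := by
  refine JlamD_le_JlamD_of_forall_exists hp hnn hlam1 fun v hv => ?_
  refine ⟨update v j |v j|, (Jlam_update_abs lam v j).trans_le hv, ?_⟩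
  rw [update_dotProduct, dotProduct_update]
  have hvj : ε * (|v j| - v j) ≤ x j * (|v j| - v j) :=
    mul_le_mul_of_nonneg_right hεle (sub_nonneg.2 (le_abs_self _))
  have := mul_nonneg hε (abs_nonneg (v j))
  linarith

end

theorem JlamD_pull_general {p : ℕ} (hp : 0 < p) (lam : Fin p → ℝ)
    (hnn : ∀ i, 0 ≤ lam i) (hlam1 : 0 < lam ⟨0, hp⟩)
    (x : Fin p → ℝ) (j l : Fin p) :
    -- (i) pulling two coordinates with x_j > x_l ≥ 0 towards each other
    ((0 ≤ x l → x l < x j → ∀ ε : ℝ, 0 < ε → ε ≤ (x j - x l) / 2 →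
      JlamD lam (Function.update (Function.update x j (x j - ε)) l (x l + ε))
        ≤ JlamD lam x)) ∧
    -- (ii) pulling a positive coordinate towards zero
    (0 < x j → ∀ ε : ℝ, 0 < ε → ε ≤ x j →
      JlamD lam (Function.update x j (x j - ε)) ≤ JlamD lam x) :=
  ⟨fun _ hlj _ hε hεle => JlamD_update_update_le hp hnn hlam1 hlj hε.le (by linarith),
    fun _ _ hε hεle => JlamD_update_sub_le hp hnn hlam1 hε.le hεle⟩

/-- monotonicity of the dual ordered ℓ1-norm under "pulling to the mean"
(part i) and "pulling to zero" (part ii). -/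
theorem JlamD_pull {p : ℕ} (hp : 0 < p) (lam : Fin p → ℝ)
    (hlam : Antitone lam) (hnn : ∀ i, 0 ≤ lam i) (hlam1 : 0 < lam ⟨0, hp⟩)
    (x : Fin p → ℝ) (j l : Fin p) :
    -- (i) pulling two coordinates with x_j > x_l ≥ 0 towards each other
    ((0 ≤ x l → x l < x j → ∀ ε : ℝ, 0 < ε → ε ≤ (x j - x l) / 2 →
      JlamD lam (Function.update (Function.update x j (x j - ε)) l (x l + ε))
        ≤ JlamD lam x)) ∧
    -- (ii) pulling a positive coordinate towards zero
    (0 < x j → ∀ ε : ℝ, 0 < ε → ε ≤ x j →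
      JlamD lam (Function.update x j (x j - ε)) ≤ JlamD lam x) :=
  JlamD_pull_general hp lam hnn hlam1 x j l
end
end

section
/- Assume λ_1 > λ_2 > … > λ_p > 0 and y_1 ≥ y_2 ≥ … ≥ y_p ≥ 0, and let w* be a solution of the orthogonal-design ODS problem: minimize J_λ(w) subject to J_λ^D(y − w) ≤ 1. Then for every j ∈ {1,…,p}, 0 ≤ w*_j ≤ y_j. -/
noncomputable section

/-- `w` is a solution of the orthogonal-design ODS problem with data `y`:
minimize `J_λ(w)` subject to `J_λ^D(y − w) ≤ 1`. -/
def IsODSSol {p : ℕ} (lam y w : Fin p → ℝ) : Prop :=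
  JlamD lam (y - w) ≤ 1 ∧ ∀ u : Fin p → ℝ, JlamD lam (y - u) ≤ 1 → Jlam lam w ≤ Jlam lam u

/-! ### Auxiliary lemmas -/

/-- The permutation realising the sorted representation of `Jlam`. -/
def sortPerm {p : ℕ} (x : Fin p → ℝ) : Equiv.Perm (Fin p) :=
  (Fin.revPerm).trans (Tuple.sort (fun i => |x i|))

lemma Jlam_eq_perm {p : ℕ} (lam x : Fin p → ℝ) :
    Jlam lam x = ∑ k, lam k * |x (sortPerm x k)| := rfl

lemma absSorted_antitone {p : ℕ} (x : Fin p → ℝ) :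
    Antitone (fun k : Fin p => |x (sortPerm x k)|) := by
  intro a b hab
  have := Tuple.monotone_sort (fun i => |x i|)
  simpa [sortPerm, Function.comp] using this (Fin.rev_le_rev.2 hab)

/-- Rearrangement bound: any permuted sum is at most `Jlam`. -/
lemma perm_sum_le_Jlam {p : ℕ} (lam x : Fin p → ℝ) (hlam : Antitone lam)
    (e : Equiv.Perm (Fin p)) :
    ∑ k, lam k * |x (e k)| ≤ Jlam lam x := by
  rw [Jlam_eq_perm]
  set g : Fin p → ℝ := fun k => |x (sortPerm x k)| with hg
  have hmono : Monovary lam g := hlam.monovary (absSorted_antitone x)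
  have key := hmono.sum_mul_comp_perm_le_sum_mul (σ := e.trans (sortPerm x).symm)
  calc ∑ k, lam k * |x (e k)|
      = ∑ k, lam k * g ((e.trans (sortPerm x).symm) k) := by
        apply Finset.sum_congr rfl; intro k _
        simp [hg, Equiv.trans_apply]
    _ ≤ ∑ k, lam k * g k := key

lemma Jlam_mono {p : ℕ} (lam a b : Fin p → ℝ) (hlam : Antitone lam)
    (hnn : ∀ i, 0 ≤ lam i) (hab : ∀ i, |a i| ≤ |b i|) :
    Jlam lam a ≤ Jlam lam b := by
  rw [Jlam_eq_perm lam a]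
  calc ∑ k, lam k * |a (sortPerm a k)|
      ≤ ∑ k, lam k * |b (sortPerm a k)| := by
        apply Finset.sum_le_sum; intro k _
        exact mul_le_mul_of_nonneg_left (hab _) (hnn k)
    _ ≤ Jlam lam b := perm_sum_le_Jlam lam b hlam _

lemma Jlam_strict_mono {p : ℕ} (lam a b : Fin p → ℝ) (hlam : Antitone lam)
    (hpos : ∀ i, 0 < lam i) (hab : ∀ i, |a i| ≤ |b i|) (j : Fin p)
    (hj : |a j| < |b j|) :
    Jlam lam a < Jlam lam b := by
  rw [Jlam_eq_perm lam a]
  have h1 : ∑ k, lam k * |a (sortPerm a k)| < ∑ k, lam k * |b (sortPerm a k)| := by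
    apply Finset.sum_lt_sum
    · intro k _; exact mul_le_mul_of_nonneg_left (hab _) (hpos k).le
    · refine ⟨(sortPerm a).symm j, Finset.mem_univ _, ?_⟩
      have h2 : (sortPerm a) ((sortPerm a).symm j) = j := Equiv.apply_symm_apply _ _
      rw [h2]
      exact mul_lt_mul_of_pos_left hj (hpos _)
  exact h1.trans_le (perm_sum_le_Jlam lam b hlam _)

lemma Jlam_congr_abs {p : ℕ} (lam a b : Fin p → ℝ) (hab : ∀ i, |a i| = |b i|) :
    Jlam lam a = Jlam lam b := by
  have hf : (fun i => |a i|) = (fun i => |b i|) := funext hab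
  unfold Jlam absSorted
  apply Finset.sum_congr rfl
  intro k _
  rw [hf, hab]

lemma Jlam_perm_rep {p : ℕ} (lam v : Fin p → ℝ) :
    Jlam lam v = ∑ i, lam ((sortPerm v).symm i) * |v i| := by
  rw [Jlam_eq_perm]
  rw [← Equiv.sum_comp (sortPerm v) (fun i => lam ((sortPerm v).symm i) * |v i|)]
  simp

/-- bound on feasible `v` -/
lemma feasible_bound {p : ℕ} (hp : 0 < p) (lam : Fin p → ℝ) (hlam : Antitone lam)
    (hpos : ∀ i, 0 < lam i) (v : Fin p → ℝ) (hv : Jlam lam v ≤ 1) :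
    ∑ i, |v i| ≤ 1 / lam ⟨p-1, by omega⟩ := by
  set L := lam ⟨p-1, by omega⟩ with hL
  have hLpos : 0 < L := hpos _
  have key : L * ∑ i, |v i| ≤ Jlam lam v := by
    rw [Jlam_perm_rep, Finset.mul_sum]
    apply Finset.sum_le_sum
    intro i _
    apply mul_le_mul_of_nonneg_right _ (abs_nonneg _)
    apply hlam
    have := ((sortPerm v).symm i).isLt
    exact Fin.le_def.2 (by simp; omega)
  rw [le_div_iff₀ hLpos]
  linarith [key.trans hv]

lemma zero_mem_S {p : ℕ} (lam x : Fin p → ℝ) :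
    (0:ℝ) ∈ {c | ∃ v : Fin p → ℝ, Jlam lam v ≤ 1 ∧ c = ∑ i, x i * v i} := by
  refine ⟨0, ?_, by simp⟩
  have : Jlam lam 0 = 0 := by
    unfold Jlam absSorted; simp
  simp [this]

lemma bddAbove_S {p : ℕ} (hp : 0 < p) (lam x : Fin p → ℝ) (hlam : Antitone lam)
    (hpos : ∀ i, 0 < lam i) :
    BddAbove {c | ∃ v : Fin p → ℝ, Jlam lam v ≤ 1 ∧ c = ∑ i, x i * v i} := by
  refine ⟨(∑ i, |x i|) * (1 / lam ⟨p-1, by omega⟩), ?_⟩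
  rintro c ⟨v, hv, rfl⟩
  have hB := feasible_bound hp lam hlam hpos v hv
  have hvb : ∀ i, |v i| ≤ 1 / lam ⟨p-1, by omega⟩ := by
    intro i
    refine le_trans ?_ hB
    exact Finset.single_le_sum (fun j _ => abs_nonneg (v j)) (Finset.mem_univ i)
  calc ∑ i, x i * v i ≤ ∑ i, |x i| * |v i| := by
        apply Finset.sum_le_sum; intro i _
        calc x i * v i ≤ |x i * v i| := le_abs_self _
          _ = |x i| * |v i| := abs_mul _ _
    _ ≤ ∑ i, |x i| * (1 / lam ⟨p-1, by omega⟩) := by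
        apply Finset.sum_le_sum; intro i _
        exact mul_le_mul_of_nonneg_left (hvb i) (abs_nonneg _)
    _ = (∑ i, |x i|) * (1 / lam ⟨p-1, by omega⟩) := by rw [← Finset.sum_mul]

lemma JlamD_mono {p : ℕ} (hp : 0 < p) (lam a b : Fin p → ℝ) (hlam : Antitone lam)
    (hpos : ∀ i, 0 < lam i) (hab : ∀ i, |a i| ≤ |b i|) :
    JlamD lam a ≤ JlamD lam b := by
  unfold JlamD
  apply csSup_le ⟨0, zero_mem_S lam a⟩
  rintro c ⟨v, hv, rfl⟩
  set v' : Fin p → ℝ := fun i => if b i < 0 then -|v i| else |v i| with hv'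
  have habs : ∀ i, |v' i| = |v i| := by
    intro i; simp only [hv']; split <;> simp
  have hfeas : Jlam lam v' ≤ 1 := by
    rw [Jlam_congr_abs lam v' v habs]; exact hv
  have hsum : ∑ i, b i * v' i = ∑ i, |b i| * |v i| := by
    apply Finset.sum_congr rfl; intro i _
    simp only [hv']
    rcases lt_or_ge (b i) 0 with h | h
    · rw [if_pos h, abs_of_neg h]; ring
    · rw [if_neg (not_lt.2 h), abs_of_nonneg h]
  have step : ∑ i, a i * v i ≤ ∑ i, b i * v' i := by
    rw [hsum]
    calc ∑ i, a i * v i ≤ ∑ i, |a i| * |v i| := by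
          apply Finset.sum_le_sum; intro i _
          calc a i * v i ≤ |a i * v i| := le_abs_self _
            _ = |a i| * |v i| := abs_mul _ _
      _ ≤ ∑ i, |b i| * |v i| := by
          apply Finset.sum_le_sum; intro i _
          exact mul_le_mul_of_nonneg_right (hab i) (abs_nonneg _)
  exact step.trans (le_csSup (bddAbove_S hp lam b hlam hpos) ⟨v', hfeas, rfl⟩)

/-- for strictly decreasing positive `λ` and sorted nonnegative data `y`,
any ODS solution `w*` satisfies `0 ≤ w*_j ≤ y_j` for all `j`. -/
theorem ods_sol_between {p : ℕ} (hp : 0 < p) (lam : Fin p → ℝ)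
    (hlam : StrictAnti lam) (hpos : ∀ i, 0 < lam i)
    (y : Fin p → ℝ) (hy : Antitone y) (hynn : ∀ i, 0 ≤ y i)
    (wstar : Fin p → ℝ) (hsol : IsODSSol lam y wstar) :
    ∀ j : Fin p, 0 ≤ wstar j ∧ wstar j ≤ y j := by
  have hA : Antitone lam := hlam.antitone
  set u : Fin p → ℝ := fun i => min (max (wstar i) 0) (y i) with hu
  have hu0 : ∀ i, 0 ≤ u i := fun i => le_min (le_max_right _ _) (hynn i)
  have huabs : ∀ i, |u i| ≤ |wstar i| := by
    intro i
    rw [abs_of_nonneg (hu0 i)]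
    exact le_trans (min_le_left _ _) (max_le (le_abs_self _) (abs_nonneg _))
  have key : ∀ i, |y i - u i| ≤ |y i - wstar i| := by
    intro i
    have hb := hynn i
    simp only [hu]
    rcases le_total (wstar i) 0 with h | h
    · rw [max_eq_right h, min_eq_left hb, sub_zero, abs_of_nonneg hb]
      calc y i ≤ y i - wstar i := by linarith
        _ ≤ |y i - wstar i| := le_abs_self _
    · rw [max_eq_left h]
      rcases le_total (wstar i) (y i) with h2 | h2
      · rw [min_eq_left h2]
      · rw [min_eq_right h2, sub_self, abs_zero]; exact abs_nonneg _
  have hfeas : JlamD lam (y - u) ≤ 1 := by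
    refine le_trans ?_ hsol.1
    exact JlamD_mono hp lam _ _ hA hpos (fun i => by simpa [Pi.sub_apply] using key i)
  have hopt : Jlam lam wstar ≤ Jlam lam u := hsol.2 u hfeas
  intro j
  by_contra hcon
  have hstrict : |u j| < |wstar j| := by
    rcases not_and_or.1 hcon with h | h
    · push_neg at h
      have : u j = 0 := by
        simp only [hu]
        rw [max_eq_right h.le, min_eq_left (hynn j)]
      rw [this, abs_zero, abs_of_neg h]
      linarith
    · push_neg at h
      have hwpos : 0 ≤ wstar j := le_trans (hynn j) h.le
      have : u j = y j := by
        simp only [hu]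
        rw [max_eq_left hwpos, min_eq_right h.le]
      rw [this, abs_of_nonneg (hynn j), abs_of_nonneg hwpos]
      exact h
  exact absurd hopt (not_le.2 (Jlam_strict_mono lam u wstar hA hpos huabs j hstrict))
end
end
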